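/- arXiv:1909.06719 — 6 statements merged into one kernel-verified Lean document; each statement's English description precedes it below -/
import Mathlib

section
/- If X is a nonempty well partial order and o(X) denotes its type (the supremum, which is attained, of order types of linear extensions of X), then o(X) equals the smallest ordinal strictly greater than o(Y) for every proper lower set Y of X. -/
open Ordinal

universe u

/-- `r` is a linear extension relation of the partial order on `X` (as a relation). -/
def IsLinExt {X : Type u} [PartialOrder X] (r : X → X → Prop) : Prop :=
  ∀ a b : X, a < b → r a b

/-- `α` is the type `o(X)` of the wpo `X`: the maximal order type of a
well-order linearizing the partial order on `X`, and this maximum is attained. -/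
def IsMaxLinearization (X : Type u) [PartialOrder X] (α : Ordinal.{u}) : Prop :=
  (∃ (r : X → X → Prop) (h : IsWellOrder X r), IsLinExt r ∧ @Ordinal.type X r h = α) ∧
  ∀ (r : X → X → Prop) (h : IsWellOrder X r), IsLinExt r → @Ordinal.type X r h ≤ α

/-- `D X`: the poset of lower sets of `X` that are downward closures of finite sets,
ordered by inclusion. -/
def DD (X : Type u) [Preorder X] : Type u :=
  {S : LowerSet X // ∃ F : Finset X, S = lowerClosure (F : Set X)}

instance {X : Type u} [Preorder X] : PartialOrder (DD X) :=
  Subtype.partialOrder _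

/-- Every pwo partial order admits a well-order linear extension. -/
theorem exists_linext_wo (Z : Type u) [PartialOrder Z] (hZ : (Set.univ : Set Z).IsPWO) :
    ∃ (r : Z → Z → Prop) (_ : IsWellOrder Z r), IsLinExt r := by
  classical
  let f : Z → LinearExtension Z := toLinearExtension
  let r : Z → Z → Prop := fun a b => f a < f b
  have hinj : ∀ {a b : Z}, f a = f b → a = b := fun h => h
  haveI h1 : IsTrichotomous Z r := by
    constructor
    intro a b
    rcases lt_trichotomy (f a) (f b) with h | h | h
    · exact fun h' _ => absurd h h'
    · exact fun _ _ => hinj h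
    · exact fun _ h' => absurd h h'
  haveI h2 : IsTrans Z r := ⟨fun _ _ _ hab hbc => lt_trans hab hbc⟩
  haveI h2b : IsIrrefl Z r := ⟨fun a => lt_irrefl (f a)⟩
  haveI h2c : IsStrictOrder Z r := ⟨⟩
  haveI h3 : IsWellFounded Z r := by
    constructor
    rw [RelEmbedding.wellFounded_iff_isEmpty]
    constructor
    intro g
    obtain ⟨m, n, hmn, hle⟩ := Set.partiallyWellOrderedOn_iff_exists_lt.1 hZ (fun k => g k) (fun _ => Set.mem_univ _)
    have h1 : r (g n) (g m) := g.map_rel_iff.2 hmn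
    have h2 : f (g m) ≤ f (g n) := toLinearExtension.monotone hle
    exact absurd (lt_of_le_of_lt h2 h1) (lt_irrefl _)
  refine ⟨r, ⟨⟩, ?_⟩
  intro a b hab
  exact (toLinearExtension.monotone hab.le).lt_of_ne fun h => hab.ne (hinj h)

theorem pwo_subtype {X : Type u} [PartialOrder X] (hw : (Set.univ : Set X).IsPWO)
    (s : Set X) : (Set.univ : Set ↥s).IsPWO := by
  refine Set.partiallyWellOrderedOn_iff_exists_lt.2 fun f _ => ?_
  obtain ⟨m, n, hmn, hle⟩ := Set.partiallyWellOrderedOn_iff_exists_lt.1 hw (fun k => (f k).1) (fun _ => Set.mem_univ _)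
  exact ⟨m, n, hmn, Subtype.coe_le_coe.1 hle⟩

/-- Appending a linearization of the complement after a linearization of a lower set. -/
theorem append_linext {X : Type u} [PartialOrder X] (Y : Set X) (hY : IsLowerSet Y)
    (rY : ↥Y → ↥Y → Prop) (hY1 : IsWellOrder ↥Y rY) (hY2 : IsLinExt rY)
    (rC : ↥(Yᶜ) → ↥(Yᶜ) → Prop) (hC1 : IsWellOrder ↥(Yᶜ) rC) (hC2 : IsLinExt rC) :
    ∃ (r : X → X → Prop) (h : IsWellOrder X r), IsLinExt r ∧
      @Ordinal.type X r h = @Ordinal.type _ rY hY1 + @Ordinal.type _ rC hC1 := by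
  classical
  haveI := hY1; haveI := hC1
  let e : X ≃ (↥Y ⊕ ↥(Yᶜ)) := (Equiv.Set.sumCompl Y).symm
  let r : X → X → Prop := fun a b => Sum.Lex rY rC (e a) (e b)
  have iso : r ≃r Sum.Lex rY rC := ⟨e, Iff.rfl⟩
  haveI hwo : IsWellOrder X r := iso.toRelEmbedding.isWellOrder
  refine ⟨r, hwo, ?_, ?_⟩
  · intro a b hab
    show Sum.Lex rY rC (e a) (e b)
    by_cases ha : a ∈ Y <;> by_cases hb : b ∈ Y
    · rw [show e a = Sum.inl ⟨a, ha⟩ from Equiv.Set.sumCompl_symm_apply_of_mem ha,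
        show e b = Sum.inl ⟨b, hb⟩ from Equiv.Set.sumCompl_symm_apply_of_mem hb]
      exact Sum.Lex.inl (hY2 _ _ (Subtype.mk_lt_mk.2 hab))
    · rw [show e a = Sum.inl ⟨a, ha⟩ from Equiv.Set.sumCompl_symm_apply_of_mem ha,
        show e b = Sum.inr ⟨b, hb⟩ from Equiv.Set.sumCompl_symm_apply_of_notMem hb]
      exact Sum.Lex.sep _ _
    · exact absurd (hY hab.le hb) ha
    · rw [show e a = Sum.inr ⟨a, ha⟩ from Equiv.Set.sumCompl_symm_apply_of_notMem ha,
        show e b = Sum.inr ⟨b, hb⟩ from Equiv.Set.sumCompl_symm_apply_of_notMem hb]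
      exact Sum.Lex.inr (hC2 _ _ (Subtype.mk_lt_mk.2 hab))
  · rw [← Ordinal.type_sum_lex]
    exact Ordinal.type_eq.2 ⟨iso⟩

/-- A nonempty family of lower sets of a pwo has a minimal element under `⊂`. -/
theorem exists_minimal_lowerset {X : Type u} [PartialOrder X]
    (hw : (Set.univ : Set X).IsPWO) (A : Set (Set X)) (hA : ∀ L ∈ A, IsLowerSet L)
    (hne : A.Nonempty) : ∃ L ∈ A, ∀ L' ∈ A, ¬ L' ⊂ L := by
  by_contra hcon
  push_neg at hcon
  obtain ⟨L0, hL0⟩ := hne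
  choose g hg1 hg2 using hcon
  let f : ℕ → {L // L ∈ A} := fun n =>
    Nat.rec ⟨L0, hL0⟩ (fun _ p => ⟨g p.1 p.2, hg1 p.1 p.2⟩) n
  have hss : ∀ n, (f (n + 1)).1 ⊂ (f n).1 := fun n => hg2 _ _
  have hmono : ∀ {m n : ℕ}, m ≤ n → (f n).1 ⊆ (f m).1 := by
    intro m n h
    induction h with
    | refl => exact subset_rfl
    | step h ih => exact (hss _).subset.trans ih
  choose x hx1 hx2 using fun n => Set.exists_of_ssubset (hss n)
  obtain ⟨m, n, hmn, hle⟩ := Set.partiallyWellOrderedOn_iff_exists_lt.1 hw (fun k => x k) (fun _ => Set.mem_univ _)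
  have h1 : x n ∈ (f (m + 1)).1 := hmono hmn (hx1 n)
  exact hx2 m (hA _ (f (m + 1)).2 hle h1)

/-- If X is a nonempty wpo, then o(X) is the smallest ordinal strictly greater than
o(Y) for every proper lower set Y of X. -/
theorem stmt0 {X : Type u} [PartialOrder X] [Nonempty X]
    (hwpo : (Set.univ : Set X).IsPWO) (α : Ordinal.{u})
    (hα : IsMaxLinearization X α) :
    (∀ Y : Set X, IsLowerSet Y → Y ≠ Set.univ →
      ∀ β : Ordinal.{u}, IsMaxLinearization (↥Y) β → β < α) ∧
    ∀ γ : Ordinal.{u},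
      (∀ Y : Set X, IsLowerSet Y → Y ≠ Set.univ →
        ∀ β : Ordinal.{u}, IsMaxLinearization (↥Y) β → β < γ) → α ≤ γ := by
  classical
  constructor
  · -- Part 1
    intro Y hY hYne β hβ
    obtain ⟨⟨rY, hw1, hlin1, hty⟩, _⟩ := hβ
    obtain ⟨rC, hw2, hlin2⟩ := exists_linext_wo ↥(Yᶜ) (pwo_subtype hwpo Yᶜ)
    obtain ⟨r, hwo, hlin, htype⟩ := append_linext Y hY rY hw1 hlin1 rC hw2 hlin2
    have h1 : @Ordinal.type X r hwo ≤ α := hα.2 r hwo hlin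
    haveI := hw2
    have hne : Nonempty ↥(Yᶜ) := by
      obtain ⟨a, ha⟩ := Set.ne_univ_iff_exists_notMem Y |>.1 hYne
      exact ⟨⟨a, ha⟩⟩
    have h2 : (0 : Ordinal) < Ordinal.type rC := by
      rcases eq_zero_or_pos (Ordinal.type rC) with h | h
      · exact absurd h (Ordinal.type_ne_zero_iff_nonempty.2 hne)
      · exact h
    have h3 : β < @Ordinal.type X r hwo := by
      rw [htype, ← hty]
      have := (add_lt_add_iff_left (@Ordinal.type _ rY hw1)).2 h2
      simpa using this
    exact lt_of_lt_of_le h3 h1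
  · -- Part 2
    intro γ H
    by_contra hle
    push_neg at hle
    -- hle : γ < α
    set A : Set (Set X) := {L | IsLowerSet L ∧ ∃ (r : ↥L → ↥L → Prop) (h : IsWellOrder ↥L r),
      IsLinExt r ∧ γ ≤ @Ordinal.type ↥L r h} with hAdef
    -- the "restriction to univ" of any linearization of X
    have pull : ∀ (rX : X → X → Prop) (hwX : IsWellOrder X rX), IsLinExt rX →
        ∃ (r : ↥(Set.univ : Set X) → ↥(Set.univ : Set X) → Prop)
          (h : IsWellOrder ↥(Set.univ : Set X) r), IsLinExt r ∧
          @Ordinal.type _ r h = @Ordinal.type X rX hwX := by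
      intro rX hwX hlinX
      haveI := hwX
      let r : ↥(Set.univ : Set X) → ↥(Set.univ : Set X) → Prop := fun a b => rX a.1 b.1
      have iso : r ≃r rX := ⟨Equiv.Set.univ X, Iff.rfl⟩
      haveI hwo : IsWellOrder _ r := iso.toRelEmbedding.isWellOrder
      refine ⟨r, hwo, ?_, Ordinal.type_eq.2 ⟨iso⟩⟩
      intro a b hab
      exact hlinX _ _ (Subtype.coe_lt_coe.2 hab)
    have hAuniv : Set.univ ∈ A := by
      obtain ⟨⟨rX, hwX, hlinX, htyX⟩, _⟩ := hα
      obtain ⟨r, hwo, hlin, hty⟩ := pull rX hwX hlinX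
      exact ⟨isLowerSet_univ, r, hwo, hlin, by rw [hty, htyX]; exact hle.le⟩
    obtain ⟨L, hLA, hmin⟩ := exists_minimal_lowerset hwpo A (fun L h => h.1) ⟨_, hAuniv⟩
    obtain ⟨hLlow, rL, hwL, hlinL, hγL⟩ := hLA
    -- key: every well-order linear extension of ↥L has type ≤ γ
    have key : ∀ (r' : ↥L → ↥L → Prop) (h' : IsWellOrder ↥L r'), IsLinExt r' →
        @Ordinal.type _ r' h' ≤ γ := by
      intro r' h' hlin'
      haveI := h'
      by_contra hgt
      push_neg at hgt
      obtain ⟨x, hx⟩ := Ordinal.typein_surj r' hgt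
      -- the initial segment below x, as a subset of X
      set I : Set X := {a : X | ∃ h : a ∈ L, r' ⟨a, h⟩ x} with hIdef
      have hIL : I ⊆ L := fun a ha => ha.choose
      have hIlow : IsLowerSet I := by
        intro a b hba haI
        obtain ⟨haL, har⟩ := haI
        have hbL : b ∈ L := hLlow hba haL
        rcases eq_or_lt_of_le hba with h | h
        · exact ⟨hbL, by rwa [show (⟨b, hbL⟩ : ↥L) = ⟨a, haL⟩ from Subtype.ext h]⟩
        · exact ⟨hbL, _root_.trans (hlin' _ _ (Subtype.mk_lt_mk.2 h)) har⟩
      have hxI : x.1 ∉ I := by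
        rintro ⟨h, hr⟩
        rw [show (⟨x.1, h⟩ : ↥L) = x from Subtype.ext rfl] at hr
        exact irrefl _ hr
      have hss : I ⊂ L := ⟨hIL, fun hc => hxI (hc x.2)⟩
      -- the restricted relation on I
      let g : ↥I → ↥L := fun a => ⟨a.1, a.2.choose⟩
      let rI : ↥I → ↥I → Prop := fun a b => r' (g a) (g b)
      have iso : rI ≃r Subrel r' (r' · x) := by
        refine ⟨⟨fun a => ⟨g a, a.2.choose_spec⟩, fun b => ⟨b.1.1, ⟨b.1.2, b.2⟩⟩,
          fun a => Subtype.ext rfl, fun b => Subtype.ext (Subtype.ext rfl)⟩, Iff.rfl⟩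
      haveI hwI : IsWellOrder ↥I rI := iso.toRelEmbedding.isWellOrder
      have hlinI : IsLinExt rI := by
        intro a b hab
        exact hlin' _ _ (Subtype.mk_lt_mk.2 hab)
      have htyI : @Ordinal.type _ rI hwI = γ := by
        rw [Ordinal.type_eq.2 ⟨iso⟩, Ordinal.type_subrel, hx]
      exact hmin I ⟨hIlow, rI, hwI, hlinI, htyI.ge⟩ hss
    have htyL : @Ordinal.type _ rL hwL = γ := le_antisymm (key rL hwL hlinL) hγL
    by_cases hLuniv : L = Set.univ
    · -- then α ≤ γ, contradiction
      obtain ⟨⟨rX, hwX, hlinX, htyX⟩, _⟩ := hα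
      obtain ⟨r, hwo, hlin, hty⟩ := pull rX hwX hlinX
      subst hLuniv
      have := key r hwo hlin
      rw [hty, htyX] at this
      exact absurd this (not_le.2 hle)
    · exact absurd (H L hLlow hLuniv γ ⟨⟨rL, hwL, hlinL, htyL⟩, key⟩) (lt_irrefl γ)
end

section
/- Every lower set of a finite Cartesian product of well-orders α₁ × ⋯ × α_m (with the componentwise order) is a finite union of 'rectangles' β₁ × ⋯ × β_m where each β_i ≤ α_i (each factor β_i being an initial segment of α_i). -/
open Ordinal

universe u

/-- Every lower set of a finite product of well-orders is a finite union of rectangles,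
each factor of a rectangle being an initial segment (lower set) of the corresponding
well-order. -/
theorem stmt1 (m : ℕ) (X : Fin m → Type u) [∀ i, LinearOrder (X i)]
    [∀ i, WellFoundedLT (X i)] (S : Set (∀ i, X i)) (hS : IsLowerSet S) :
    ∃ (n : ℕ) (B : Fin n → ∀ i, Set (X i)),
      (∀ j i, IsLowerSet (B j i)) ∧
      S = ⋃ j : Fin n, {x : ∀ i, X i | ∀ i, x i ∈ B j i} := by
  classical
  set T : Set (∀ i, X i) := Sᶜ with hT
  set M : Set (∀ i, X i) := {x | x ∈ T ∧ ∀ y ∈ T, ¬ y < x} with hM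
  have hPWO : T.IsPWO := Set.isPWO_of_wellQuasiOrderedLE T
  have hanti : IsAntichain (· ≤ ·) M := by
    intro a ha b hb hne hle
    exact hb.2 a ha.1 (lt_of_le_of_ne hle hne)
  have hMfin : M.Finite :=
    hanti.finite_of_partiallyWellOrderedOn (hPWO.mono (fun x hx => hx.1))
  have hmin : ∀ x ∈ T, ∃ f ∈ M, f ≤ x := by
    intro x hx
    have hW : ({y ∈ T | y ≤ x}).IsWF := hPWO.isWF.mono (Set.sep_subset _ _)
    have hne : ({y ∈ T | y ≤ x}).Nonempty := ⟨x, hx, le_refl x⟩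
    have hmem := hW.min_mem hne
    refine ⟨hW.min hne, ⟨hmem.1, fun y hy hyx => ?_⟩, hmem.2⟩
    exact hW.not_lt_min hne ⟨hy, hyx.le.trans hmem.2⟩ hyx
  have hSc : ∀ x, x ∈ S ↔ ∀ f ∈ M, ∃ i, x i < f i := by
    intro x
    constructor
    · intro hx f hf
      by_contra h
      push_neg at h
      exact hf.1 (hS h hx)
    · intro h
      by_contra hx
      obtain ⟨f, hf, hfx⟩ := hmin x hx
      obtain ⟨i, hi⟩ := h f hf
      exact absurd (hfx i) (not_le.2 hi)
  let F : Finset (∀ i, X i) := hMfin.toFinset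
  let G := ↥F → Fin m
  haveI : Fintype G := by infer_instance
  let e : Fin (Fintype.card G) ≃ G := (Fintype.equivFin G).symm
  refine ⟨Fintype.card G, fun j i => {y | ∀ f : F, e j f = i → y < (f : ∀ i, X i) i}, ?_, ?_⟩
  · intro j i a b hba hb f hf
    exact lt_of_le_of_lt hba (hb f hf)
  · ext x
    simp only [Set.mem_iUnion, Set.mem_setOf_eq]
    rw [hSc x]
    constructor
    · intro h
      have hch : ∀ f : F, ∃ i, x i < (f : ∀ i, X i) i := by
        intro f
        exact h f (hMfin.mem_toFinset.mp f.2)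
      choose g hg using hch
      refine ⟨e.symm g, fun i f hf => ?_⟩
      rw [e.apply_symm_apply] at hf
      exact hf ▸ hg f
    · rintro ⟨j, hj⟩ f hf
      have hfF : f ∈ F := hMfin.mem_toFinset.mpr hf
      exact ⟨e j ⟨f, hfF⟩, hj _ ⟨f, hfF⟩ rfl⟩
end

section
/- For well partial orders X and Y, o(X ⊔ Y) = o(X) ⊕ o(Y), where ⊔ is disjoint union (no relations between the parts) and ⊕ is the natural (Hessenberg) sum of ordinals. -/
/-!
If `t` well-orders `X ⊕ Y`, the map sending `z` to `i ♯ j`, where `i` and `j` are the order types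
of the elements of `X` and of `Y` below `z`, is strictly increasing with values below
`type (t on X) ♯ type (t on Y)`; hence `o(X ⊔ Y) ≤ o(X) ♯ o(Y)`.

Conversely, well-orders of types `a ≥ b` can be interleaved into a well-order of type at least
`a ♯ b`: writing `a = ω ^ e + c` with `e = log ω a`, put the first `ω ^ e` elements of the
first order in front of an interleaving of the remaining ones with the second, and use
`(ω ^ e + c) ♯ b ≤ ω ^ e + (c ♯ b)` for `b < ω ^ (e + 1)`.
-/

open Ordinal

universe u

/-- Natural (Hessenberg) sum of ordinals, as formerly in Mathlib's `Ordinal.nadd`. -/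
noncomputable def Ordinal.nadd (a b : Ordinal.{u}) : Ordinal.{u} :=
  max (⨆ x : Set.Iio a, Order.succ (Ordinal.nadd x.1 b))
    (⨆ x : Set.Iio b, Order.succ (Ordinal.nadd a x.1))
termination_by (a, b)
decreasing_by all_goals cases x; decreasing_tactic

infixl:65 " ♯ " => Ordinal.nadd

namespace Ordinal

theorem nadd_def (a b : Ordinal.{u}) : a ♯ b =
    max (⨆ x : Set.Iio a, Order.succ (x.1 ♯ b)) (⨆ x : Set.Iio b, Order.succ (a ♯ x.1)) := by
  rw [Ordinal.nadd]

theorem lt_nadd_iff {a b c : Ordinal.{u}} :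
    a < b ♯ c ↔ (∃ b' < b, a ≤ b' ♯ c) ∨ ∃ c' < c, a ≤ b ♯ c' := by
  rw [nadd_def, lt_max_iff, Ordinal.lt_iSup_iff, Ordinal.lt_iSup_iff]
  simp only [Order.lt_succ_iff, Subtype.exists, Set.mem_Iio, exists_prop]

theorem nadd_le_iff {a b c : Ordinal.{u}} :
    b ♯ c ≤ a ↔ (∀ b' < b, b' ♯ c < a) ∧ ∀ c' < c, b ♯ c' < a := by
  rw [← not_lt, lt_nadd_iff]
  simp only [not_or, not_exists, not_and, not_le]

theorem nadd_lt_nadd_left {b c : Ordinal.{u}} (h : b < c) (a : Ordinal.{u}) : a ♯ b < a ♯ c :=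
  lt_nadd_iff.2 (Or.inr ⟨b, h, le_rfl⟩)

theorem nadd_lt_nadd_right {b c : Ordinal.{u}} (h : b < c) (a : Ordinal.{u}) : b ♯ a < c ♯ a :=
  lt_nadd_iff.2 (Or.inl ⟨b, h, le_rfl⟩)

theorem nadd_le_nadd {a b c d : Ordinal.{u}} (hab : a ≤ b) (hcd : c ≤ d) :
    a ♯ c ≤ b ♯ d := by
  calc a ♯ c ≤ a ♯ d := (StrictMono.monotone fun _ _ h => nadd_lt_nadd_left h a) hcd
    _ ≤ b ♯ d := (StrictMono.monotone fun _ _ h => nadd_lt_nadd_right h d) hab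

theorem nadd_lt_nadd_of_lt_of_le {a b c d : Ordinal.{u}} (hab : a < b) (hcd : c ≤ d) :
    a ♯ c < b ♯ d :=
  (nadd_lt_nadd_right hab c).trans_le (nadd_le_nadd le_rfl hcd)

theorem nadd_lt_nadd_of_le_of_lt {a b c d : Ordinal.{u}} (hab : a ≤ b) (hcd : c < d) :
    a ♯ c < b ♯ d :=
  (nadd_le_nadd hab le_rfl).trans_lt (nadd_lt_nadd_left hcd b)

theorem nadd_comm (a b : Ordinal.{u}) : a ♯ b = b ♯ a := by
  induction a using WellFoundedLT.induction generalizing b with | _ a iha =>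
  induction b using WellFoundedLT.induction with | _ b ihb =>
  rw [nadd_def, nadd_def b a, max_comm]
  congr 1 <;> congr 1 <;> funext x
  · rw [ihb x.1 x.2]
  · rw [iha x.1 x.2]

theorem le_nadd_self (a b : Ordinal.{u}) : b ≤ a ♯ b :=
  StrictMono.le_apply (f := (a ♯ ·)) fun _ _ h => nadd_lt_nadd_left h a

theorem zero_nadd (a : Ordinal.{u}) : 0 ♯ a = a := by
  refine le_antisymm ?_ (le_nadd_self 0 a)
  induction a using WellFoundedLT.induction with | _ a ih =>
  refine nadd_le_iff.2 ⟨fun b hb => absurd hb (by simp), fun b hb => ?_⟩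
  exact (ih b hb).trans_lt hb

theorem lt_omega0_opow_add_self {c e : Ordinal.{u}} (h : ω ^ e + c < ω ^ Order.succ e) :
    c < ω ^ e + c := by
  refine le_add_self.lt_of_ne fun hc => h.not_ge ?_
  rw [opow_succ]
  exact (Ordinal.add_eq_right_iff_mul_omega0_le.1 hc.symm).trans le_add_self

theorem omega0_opow_add_nadd_le_of_forall {e b : Ordinal.{u}}
    (hb : ∀ b' ≤ b, ∀ a < ω ^ e, a ♯ b' < ω ^ e + b') (c : Ordinal.{u}) :
    (ω ^ e + c) ♯ b ≤ ω ^ e + (c ♯ b) := by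
  induction b using WellFoundedLT.induction generalizing c with | _ b ihb =>
  induction c using WellFoundedLT.induction with | _ c ihc =>
  refine nadd_le_iff.2 ⟨fun a ha => ?_, fun b' hb' => ?_⟩
  · rcases lt_or_ge a (ω ^ e) with hae | hae
    · exact (hb b le_rfl a hae).trans_le (add_le_add_right (le_nadd_self c b) _)
    · obtain ⟨c', rfl⟩ := exists_add_of_le hae
      have hc' : c' < c := (add_lt_add_iff_left _).1 ha
      exact (ihc c' hc').trans_lt (add_lt_add_right (nadd_lt_nadd_right hc' b) _)
  · have hb'' : ∀ b'' ≤ b', ∀ a < ω ^ e, a ♯ b'' < ω ^ e + b'' :=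
      fun b'' h => hb b'' (h.trans hb'.le)
    exact (ihb b' hb' hb'' c).trans_lt (add_lt_add_right (nadd_lt_nadd_left hb' c) _)

theorem nadd_lt_omega0_opow_add {e a b : Ordinal.{u}} (he : IsPrincipal (· ♯ ·) (ω ^ e))
    (ha : a < ω ^ e) (hb : b < ω ^ Order.succ e) : a ♯ b < ω ^ e + b := by
  induction b using WellFoundedLT.induction with | _ b ih =>
  rcases lt_or_ge b (ω ^ e) with hbe | hbe
  · exact (he ha hbe).trans_le le_self_add
  obtain ⟨b₀, rfl⟩ := exists_add_of_le hbe
  have hb₀ : b₀ < ω ^ e + b₀ := lt_omega0_opow_add_self hb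
  have ha' : ∀ b' ≤ a, ∀ a' < ω ^ e, a' ♯ b' < ω ^ e + b' :=
    fun b' hb' a' ha' => (he ha' (hb'.trans_lt ha)).trans_le le_self_add
  calc a ♯ (ω ^ e + b₀) = (ω ^ e + b₀) ♯ a := nadd_comm _ _
    _ ≤ ω ^ e + (b₀ ♯ a) := omega0_opow_add_nadd_le_of_forall ha' b₀
    _ < ω ^ e + (ω ^ e + b₀) := by
      rw [nadd_comm]
      exact add_lt_add_right (ih b₀ hb₀ (hb₀.trans hb)) _

theorem omega0_opow_add_nadd_le_of_isPrincipal {e b : Ordinal.{u}}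
    (he : IsPrincipal (· ♯ ·) (ω ^ e)) (hb : b < ω ^ Order.succ e) (c : Ordinal.{u}) :
    (ω ^ e + c) ♯ b ≤ ω ^ e + (c ♯ b) :=
  omega0_opow_add_nadd_le_of_forall
    (fun _ hb' _ ha => nadd_lt_omega0_opow_add he ha (hb'.trans_lt hb)) c

theorem isPrincipal_nadd_omega0_opow (e : Ordinal.{u}) : IsPrincipal (· ♯ ·) (ω ^ e) := by
  induction e using WellFoundedLT.induction with | _ e ihe =>
  suffices ∀ v a b, a ♯ b = v → a < ω ^ e → b < ω ^ e → v < ω ^ e from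
    fun a b ha hb => this _ a b rfl ha hb
  intro v
  induction v using WellFoundedLT.induction with | _ v ihv =>
  intro a b hv ha hb
  wlog hab : a ≤ b generalizing a b
  · exact this b a (by rw [nadd_comm, hv]) hb ha (le_of_not_ge hab)
  rcases eq_or_ne b 0 with rfl | hb0
  · obtain rfl := nonpos_iff_eq_zero.1 hab
    rwa [← hv, zero_nadd]
  set d := log ω b
  have hbd : b < ω ^ Order.succ d := lt_opow_succ_log_self one_lt_omega0 b
  have hde : d < e :=
    (opow_lt_opow_iff_right one_lt_omega0).1 ((opow_log_le_self ω hb0).trans_lt hb)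
  obtain ⟨b₀, hb₀⟩ := exists_add_of_le (opow_log_le_self ω hb0)
  have hb₀b : b₀ < b := by
    rw [hb₀] at hbd ⊢
    exact lt_omega0_opow_add_self hbd
  have hv₀ : b₀ ♯ a < v := hv ▸ nadd_comm a b ▸ nadd_lt_nadd_right hb₀b a
  calc v = (ω ^ d + b₀) ♯ a := by rw [← hv, nadd_comm, ← hb₀]
    _ ≤ ω ^ d + (b₀ ♯ a) :=
      omega0_opow_add_nadd_le_of_isPrincipal (ihe d hde) (hab.trans_lt hbd) b₀
    _ < ω ^ e := isPrincipal_add_omega0_opow e ((opow_lt_opow_iff_right one_lt_omega0).2 hde)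
      (ihv _ hv₀ b₀ a rfl (hb₀b.trans hb) ha)

theorem omega0_opow_add_nadd_le {e b : Ordinal.{u}} (hb : b < ω ^ Order.succ e)
    (c : Ordinal.{u}) : (ω ^ e + c) ♯ b ≤ ω ^ e + (c ♯ b) :=
  omega0_opow_add_nadd_le_of_isPrincipal (isPrincipal_nadd_omega0_opow e) hb c

end Ordinal

section WellOrder

variable {X Y : Type u}

instance isWellOrder_preimage_inl (t : X ⊕ Y → X ⊕ Y → Prop) [IsWellOrder (X ⊕ Y) t] :
    IsWellOrder X (Sum.inl ⁻¹'o t) :=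
  (RelEmbedding.preimage Function.Embedding.inl t).isWellOrder

instance isWellOrder_preimage_inr (t : X ⊕ Y → X ⊕ Y → Prop) [IsWellOrder (X ⊕ Y) t] :
    IsWellOrder Y (Sum.inr ⁻¹'o t) :=
  (RelEmbedding.preimage Function.Embedding.inr t).isWellOrder

variable (r : X → X → Prop) [IsWellOrder X r]

theorem typein_le_of_forall_rel_lt {f : X → Ordinal.{u}} (hf : ∀ a b, r a b → f a < f b)
    (a : X) : typein r a ≤ f a := by
  induction a using IsWellFounded.induction r with | _ a ih =>
  refine le_of_forall_lt fun o ho => ?_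
  obtain ⟨b, rfl⟩ := typein_surj r (ho.trans (typein_lt_type r a))
  have hba := (typein_lt_typein r).1 ho
  exact (ih b hba).trans_lt (hf b a hba)

theorem type_le_of_forall_rel_lt {f : X → Ordinal.{u}} (hf : ∀ a b, r a b → f a < f b)
    {M : Ordinal.{u}} (hM : ∀ a, f a < M) : type r ≤ M := by
  refine le_of_forall_lt fun o ho => ?_
  obtain ⟨a, rfl⟩ := typein_surj r ho
  exact (typein_le_of_forall_rel_lt r hf a).trans_lt (hM a)

theorem type_subrel_mono {p q : X → Prop} (h : ∀ a, p a → q a) :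
    type (Subrel r p) ≤ type (Subrel r q) :=
  type_le_iff'.2 ⟨⟨Subtype.impEmbedding p q h, Iff.rfl⟩⟩

theorem type_subrel_le (p : X → Prop) : type (Subrel r p) ≤ type r :=
  type_le_iff'.2 ⟨Subrel.relEmbedding r p⟩

theorem type_subrel_lt_type {p : X → Prop} {x : X} (h : ∀ a, p a → r a x) :
    type (Subrel r p) < type r :=
  (type_subrel_mono r h).trans_lt (typein_lt_type r x)

theorem type_subrel_lt_type_subrel {p q : X → Prop} (hpq : ∀ a, p a → q a) {x : X} (hx : q x)
    (h : ∀ a, p a → r a x) : type (Subrel r p) < type (Subrel r q) := by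
  refine (type_le_iff'.2 ⟨?_⟩).trans_lt (typein_lt_type (Subrel r q) ⟨x, hx⟩)
  refine ⟨⟨fun a => ⟨⟨a.1, hpq _ a.2⟩, h _ a.2⟩, fun a b hab => ?_⟩, Iff.rfl⟩
  exact Subtype.ext (congrArg (fun c => c.1.1) hab)

end WellOrder

theorem type_le_nadd_type_preimage_inl_inr {X Y : Type u} (t : X ⊕ Y → X ⊕ Y → Prop)
    [IsWellOrder (X ⊕ Y) t] :
    type t ≤ type (Sum.inl ⁻¹'o t) ♯ type (Sum.inr ⁻¹'o t) := by
  set i : X ⊕ Y → Ordinal.{u} := fun z =>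
    type (Subrel (Sum.inl ⁻¹'o t) fun x => t (.inl x) z)
  set j : X ⊕ Y → Ordinal.{u} := fun z =>
    type (Subrel (Sum.inr ⁻¹'o t) fun y => t (.inr y) z)
  have hi {z z'} (h : t z z') : i z ≤ i z' := type_subrel_mono _ fun _ hx => _root_.trans hx h
  have hj {z z'} (h : t z z') : j z ≤ j z' := type_subrel_mono _ fun _ hy => _root_.trans hy h
  have hi_lt {x z'} (h : t (.inl x) z') : i (.inl x) < i z' :=
    type_subrel_lt_type_subrel _ (fun _ ha => _root_.trans ha h) h fun _ ha => ha
  have hj_lt {y z'} (h : t (.inr y) z') : j (.inr y) < j z' :=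
    type_subrel_lt_type_subrel _ (fun _ ha => _root_.trans ha h) h fun _ ha => ha
  refine type_le_of_forall_rel_lt t (f := fun z => i z ♯ j z) ?_ ?_
  · rintro (x | y) z' h
    · exact nadd_lt_nadd_of_lt_of_le (hi_lt h) (hj h)
    · exact nadd_lt_nadd_of_le_of_lt (hi h) (hj_lt h)
  · rintro (x | y)
    · exact nadd_lt_nadd_of_lt_of_le (type_subrel_lt_type _ fun _ ha => ha) (type_subrel_le _ _)
    · exact nadd_lt_nadd_of_le_of_lt (type_subrel_le _ _) (type_subrel_lt_type _ fun _ ha => ha)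

def HasNaddMerge {X Y : Type u} (r : X → X → Prop) (s : Y → Y → Prop) [IsWellOrder X r]
    [IsWellOrder Y s] : Prop :=
  ∃ (t : X ⊕ Y → X ⊕ Y → Prop) (_ : IsWellOrder (X ⊕ Y) t),
    Sum.LiftRel r s ≤ t ∧ type r ♯ type s ≤ type t

namespace HasNaddMerge

variable {X Y : Type u} {r : X → X → Prop} {s : Y → Y → Prop}
  [IsWellOrder X r] [IsWellOrder Y s]

theorem of_nadd_le_add (h : type r ♯ type s ≤ type r + type s) : HasNaddMerge r s :=
  ⟨Sum.Lex r s, inferInstance, fun _ _ => Sum.LiftRel.lex, by rwa [type_sum_lex]⟩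

theorem swap (h : HasNaddMerge s r) : HasNaddMerge r s := by
  obtain ⟨t, _, ht, hty⟩ := h
  refine ⟨Equiv.sumComm X Y ⁻¹'o t, inferInstance, ?_, ?_⟩
  · rintro _ _ (⟨h⟩ | ⟨h⟩)
    exacts [ht _ _ (.inr h), ht _ _ (.inl h)]
  · rwa [type_preimage, nadd_comm]

theorem congr_left {X' : Type u} {r' : X' → X' → Prop} [IsWellOrder X' r'] (e : r' ≃r r)
    (h : HasNaddMerge r' s) : HasNaddMerge r s := by
  obtain ⟨t, _, ht, hty⟩ := h
  refine ⟨Equiv.sumCongr e.symm.toEquiv (Equiv.refl Y) ⁻¹'o t, inferInstance, ?_, ?_⟩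
  · rintro _ _ (⟨h⟩ | ⟨h⟩)
    · exact ht _ _ (.inl (e.symm.map_rel_iff.2 h))
    · exact ht _ _ (.inr h)
  · rwa [type_preimage, ← e.ordinalType_congr]

theorem sumLex {P : Type u} (r₀ : P → P → Prop) [IsWellOrder P r₀] (h : HasNaddMerge r s)
    (hle : (type r₀ + type r) ♯ type s ≤ type r₀ + (type r ♯ type s)) :
    HasNaddMerge (Sum.Lex r₀ r) s := by
  obtain ⟨t, _, ht, hty⟩ := h
  refine ⟨Equiv.sumAssoc P X Y ⁻¹'o Sum.Lex r₀ t, inferInstance, ?_, ?_⟩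
  · rintro _ _ (⟨h⟩ | ⟨h⟩)
    · rcases h with ⟨h⟩ | ⟨h⟩ | _
      · exact Sum.Lex.inl h
      · exact Sum.Lex.inr (ht _ _ (.inl h))
      · exact Sum.Lex.sep _ _
    · exact Sum.Lex.inr (ht _ _ (.inr h))
  · rw [type_preimage, type_sum_lex, type_sum_lex]
    exact hle.trans (add_le_add_right hty _)

theorem of_type_le (hle : type s ≤ type r)
    (ih : ∀ (X' : Type u) (r' : X' → X' → Prop) [IsWellOrder X' r'], type r' < type r →
      HasNaddMerge r' s) :
    HasNaddMerge r s := by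
  by_cases hlex : type r ♯ type s ≤ type r + type s
  · exact of_nadd_le_add hlex
  classical
  have hr0 : type r ≠ 0 := fun h => hlex (by rw [h, zero_nadd, zero_add])
  set e := log ω (type r)
  have hr : type r < ω ^ Order.succ e := lt_opow_succ_log_self one_lt_omega0 _
  have hs : type s < ω ^ Order.succ e := hle.trans_lt hr
  have he : ω ^ e < type r := by
    refine (opow_log_le_self ω hr0).lt_of_ne fun h => hlex ?_
    have h₀ := omega0_opow_add_nadd_le hs 0
    rwa [add_zero, zero_nadd, h] at h₀
  set x₀ := enum r ⟨ω ^ e, he⟩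
  have hsplit : ω ^ e + type (Subrel r (¬ r · x₀)) = type r := by
    rw [← typein_enum r he, ← type_subrel, ← type_sum_lex]
    exact (RelIso.sumLexComplLeft r x₀).ordinalType_congr
  refine (sumLex _ (ih _ _ ?_) ?_).congr_left (RelIso.sumLexComplLeft r x₀)
  · rw [← hsplit]
    exact lt_omega0_opow_add_self (hsplit ▸ hr)
  · rw [type_subrel, typein_enum]
    exact omega0_opow_add_nadd_le hs _

end HasNaddMerge

theorem hasNaddMerge {X Y : Type u} (r : X → X → Prop) (s : Y → Y → Prop) [IsWellOrder X r]
    [IsWellOrder Y s] : HasNaddMerge r s := by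
  suffices H : ∀ v, ∀ (X Y : Type u) (r : X → X → Prop) (s : Y → Y → Prop)
      [IsWellOrder X r] [IsWellOrder Y s], type r ♯ type s = v → HasNaddMerge r s from
    H _ X Y r s rfl
  intro v
  induction v using WellFoundedLT.induction with | _ v ih =>
  intro X Y r s _ _ hv
  rcases le_total (type s) (type r) with h | h
  · exact .of_type_le h fun X' r' _ h' => ih _ (hv ▸ nadd_lt_nadd_right h' _) X' Y r' s rfl
  · refine (HasNaddMerge.of_type_le h fun Y' s' _ h' => ih _ ?_ Y' X s' r rfl).swap
    rw [← hv, nadd_comm (type r)]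
    exact nadd_lt_nadd_right h' _

section LinearExtension

variable {X Y : Type u} [PartialOrder X] [PartialOrder Y]

theorem IsLinExt.preimage_inl {t : X ⊕ Y → X ⊕ Y → Prop} (ht : IsLinExt t) :
    IsLinExt (Sum.inl ⁻¹'o t) :=
  fun _ _ h => ht _ _ (Sum.inl_lt_inl_iff.2 h)

theorem IsLinExt.preimage_inr {t : X ⊕ Y → X ⊕ Y → Prop} (ht : IsLinExt t) :
    IsLinExt (Sum.inr ⁻¹'o t) :=
  fun _ _ h => ht _ _ (Sum.inr_lt_inr_iff.2 h)

theorem IsLinExt.of_liftRel_le {r : X → X → Prop} {s : Y → Y → Prop}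
    {t : X ⊕ Y → X ⊕ Y → Prop} (hr : IsLinExt r) (hs : IsLinExt s) (h : Sum.LiftRel r s ≤ t) :
    IsLinExt t :=
  fun _ _ huv => h _ _ ((Sum.lt_def.1 huv).mono hr hs)

end LinearExtension

theorem stmt5_general {X Y : Type u} [PartialOrder X] [PartialOrder Y]
    (α β γ : Ordinal.{u}) (hα : IsMaxLinearization X α) (hβ : IsMaxLinearization Y β)
    (hγ : IsMaxLinearization (X ⊕ Y) γ) : γ = α ♯ β := by
  obtain ⟨⟨r, _, hr, rfl⟩, hα_max⟩ := hα
  obtain ⟨⟨s, _, hs, rfl⟩, hβ_max⟩ := hβ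
  obtain ⟨⟨t, _, ht, rfl⟩, hγ_max⟩ := hγ
  refine le_antisymm ?_ ?_
  · calc type t ≤ type (Sum.inl ⁻¹'o t) ♯ type (Sum.inr ⁻¹'o t) :=
          type_le_nadd_type_preimage_inl_inr t
      _ ≤ type r ♯ type s :=
          nadd_le_nadd (hα_max _ _ ht.preimage_inl) (hβ_max _ _ ht.preimage_inr)
  · obtain ⟨t', _, ht', hle⟩ := hasNaddMerge r s
    exact hle.trans (hγ_max t' _ (hr.of_liftRel_le hs ht'))

/-- De Jongh–Parikh: o(X ⊔ Y) = o(X) ♯ o(Y) (natural sum). -/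
theorem stmt5 {X Y : Type u} [PartialOrder X] [PartialOrder Y]
    (hX : (Set.univ : Set X).IsPWO) (hY : (Set.univ : Set Y).IsPWO)
    (α β γ : Ordinal.{u}) (hα : IsMaxLinearization X α) (hβ : IsMaxLinearization Y β)
    (hγ : IsMaxLinearization (X ⊕ Y) γ) : γ = α ♯ β :=
  stmt5_general α β γ hα hβ hγ
end

section
/- If X is a well partial order with o(X) = α + 1 a successor ordinal, then there exists a maximal element x of X such that o(X \ {x}) = α. -/
open Ordinal

universe u

/-- If o(X) = α + 1 is a successor, then X has a maximal element x with o(X \ {x}) = α. -/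
theorem stmt12 {X : Type u} [PartialOrder X] (hwpo : (Set.univ : Set X).IsPWO)
    (α : Ordinal.{u}) (h : IsMaxLinearization X (α + 1)) :
    ∃ x : X, (∀ y : X, x ≤ y → y = x) ∧
      IsMaxLinearization {y : X // y ≠ x} α := by
  classical
  obtain ⟨⟨r, hwo, hext, htype⟩, hmax⟩ := h
  have hα : α < type r := by rw [htype]; exact lt_add_one α
  set x : X := enum r ⟨α, hα⟩ with hx
  -- x is the top element of r
  have htop : ∀ y : X, ¬ r x y := by
    intro y hy
    have h1 : α < typein r y := by
      have := (typein_lt_typein r).2 hy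
      rwa [typein_enum] at this
    have h2 : typein r y < α + 1 := htype ▸ typein_lt_type r y
    rw [add_one_eq_succ, Order.lt_succ_iff] at h2
    exact absurd h1 (not_lt.2 h2)
  have hmaxel : ∀ y : X, x ≤ y → y = x := by
    intro y hxy
    by_contra hne
    exact htop y (hext x y (lt_of_le_of_ne hxy (Ne.symm hne)))
  have hiff : ∀ y : X, y ≠ x ↔ r y x := by
    intro y
    constructor
    · intro hy
      rcases trichotomous_of r y x with h1 | h1 | h1
      · exact h1
      · exact absurd h1 hy
      · exact absurd h1 (htop y)
    · intro hy h1
      exact irrefl_of r x (h1 ▸ hy)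
  refine ⟨x, hmaxel, ?_, ?_⟩
  · -- existence of a linearization of type α on the subtype
    refine ⟨Subrel r (fun y : X => y ≠ x), inferInstance, ?_, ?_⟩
    · intro a b hab
      exact hext a.1 b.1 (Subtype.coe_lt_coe.2 hab)
    · have hiso : Subrel r (fun y : X => y ≠ x) ≃r Subrel r (r · x) :=
        ⟨Equiv.subtypeEquivRight hiff, Iff.rfl⟩
      rw [hiso.ordinalType_congr, type_subrel, typein_enum]
  · -- any linearization of the subtype has type ≤ α
    intro s hs hsext
    haveI : Subsingleton {y : X // ¬ y ≠ x} := by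
      constructor
      rintro ⟨a, ha⟩ ⟨b, hb⟩
      simp only [not_not] at ha hb
      subst ha; subst hb; rfl
    let t : ({y : X // y ≠ x} ⊕ {y : X // ¬ y ≠ x}) → _ → Prop := Sum.Lex s emptyRelation
    haveI htwo : IsWellOrder _ t := inferInstanceAs (IsWellOrder _ (Sum.Lex s emptyRelation))
    let e : ({y : X // y ≠ x} ⊕ {y : X // ¬ y ≠ x}) ≃ X := Equiv.sumCompl (fun y => y ≠ x)
    let r₂ : X → X → Prop := fun a b => t (e.symm a) (e.symm b)
    have hiso : r₂ ≃r t := RelIso.preimage e.symm t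
    haveI hwr₂ : IsWellOrder X r₂ := hiso.toRelEmbedding.isWellOrder
    have hlin : IsLinExt r₂ := by
      intro a b hab
      by_cases hbx : b = x
      · have hax : a ≠ x := by rintro rfl; rw [hbx] at hab; exact lt_irrefl _ hab
        show t (e.symm a) (e.symm b)
        rw [show e.symm a = Sum.inl ⟨a, hax⟩ from
            Equiv.sumCompl_symm_apply_of_pos (p := fun y => y ≠ x) hax,
          show e.symm b = Sum.inr ⟨b, not_not.2 hbx⟩ from
            Equiv.sumCompl_symm_apply_of_neg (p := fun y => y ≠ x) (not_not.2 hbx)]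
        exact Sum.Lex.sep _ _
      · by_cases hax : a = x
        · exact absurd (hext a b hab) (hax ▸ htop b)
        · show t (e.symm a) (e.symm b)
          rw [show e.symm a = Sum.inl ⟨a, hax⟩ from
              Equiv.sumCompl_symm_apply_of_pos (p := fun y => y ≠ x) hax,
            show e.symm b = Sum.inl ⟨b, hbx⟩ from
              Equiv.sumCompl_symm_apply_of_pos (p := fun y => y ≠ x) hbx]
          exact Sum.Lex.inl (hsext ⟨a, hax⟩ ⟨b, hbx⟩ (Subtype.mk_lt_mk.2 hab))
    have h2 : type r₂ = type s + 1 := by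
      rw [hiso.ordinalType_congr]
      have h4 : type t = type s + type (emptyRelation (α := {y : X // ¬ y ≠ x})) :=
        type_sum_lex s emptyRelation
      rw [h4]
      congr 1
      haveI : Nonempty {y : X // ¬ y ≠ x} := ⟨⟨x, not_not.2 rfl⟩⟩
      exact type_eq_one_of_unique _
    have h3 := hmax r₂ hwr₂ hlin
    rw [h2, add_one_eq_succ, add_one_eq_succ, Order.succ_le_succ_iff] at h3
    exact h3
end

section
/- Define the Hardy functions H_α : ℕ → ℕ for α < ω^{ω^ω} by H₀(x) = x, H_{α+1}(x) = H_α(x+1), and H_λ(x) = H_{λ[x]}(x+1) for limits λ, using the standard fundamental sequences. Then for every K ∈ ℕ there is a sequence (D_i)_{i=1}^{L} of finite lower sets of ℕ² with L ≥ H_{ω^{ω+2}}(K) − K such that each D_i is a finite union of maximal intervals whose finite side lengths are bounded by (K+i)², and D_i ⊄ D_j for all 1 ≤ i < j ≤ L. -/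
open Ordinal

universe u

/-- The rectangle (interval) in ℕ² with side "lengths" u, v ∈ ℕ ∪ {∞}: a side u = n
means the initial segment {0,…,n-1}, and u = ⊤ means all of ℕ. -/
def rect (u v : WithTop ℕ) : Set (ℕ × ℕ) :=
  {p : ℕ × ℕ | (p.1 : WithTop ℕ) < u ∧ (p.2 : WithTop ℕ) < v}

namespace S16
open Ordinal
universe v

noncomputable def tau : List Ordinal.{v} → Ordinal.{v}
  | [] => 0
  | e :: t => tau t + ω ^ e

theorem tau_append (A B : List Ordinal.{v}) : tau (A ++ B) = tau B + tau A := by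
  induction A with
  | nil => simp [tau]
  | cons e t ih => simp [tau, ih, add_assoc]

theorem tau_replicate (n : ℕ) (e : Ordinal.{v}) : tau (List.replicate n e) = ω ^ e * n := by
  induction n with
  | zero => simp [tau]
  | succ m ih =>
      rw [List.replicate_succ, tau, ih, Nat.cast_add_one, mul_add, mul_one]

theorem lt_add_of_lt_mul_omega {b l : Ordinal.{v}} (h : l < ω ^ b * ω) : l < ω ^ b + l := by
  by_contra hc
  push_neg at hc
  have he : ω ^ b + l = l := le_antisymm hc le_add_self
  have hn : ∀ n : ℕ, ω ^ b * n + l = l := by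
    intro n
    induction n with
    | zero => simp
    | succ m ih =>
        rw [Nat.cast_add_one, mul_add, mul_one, add_assoc, he, ih]
  have : ω ^ b * ω ≤ l := by
    rw [mul_le_iff_of_isSuccLimit isSuccLimit_omega0]
    intro b' hb'
    obtain ⟨n, rfl⟩ := lt_omega0.1 hb'
    calc ω ^ b * n ≤ ω ^ b * n + l := le_self_add
    _ = l := hn n
  exact absurd h (not_lt.2 this)

theorem fs_tau_add (fs : Ordinal.{v} → ℕ → Ordinal.{v})
    (hfs3 : ∀ (b l : Ordinal.{v}) (x : ℕ), Order.IsSuccLimit l → l < ω ^ b + l →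
      fs (ω ^ b + l) x = ω ^ b + fs l x) (x : ℕ) :
    ∀ (t : List Ordinal.{v}) (c l : Ordinal.{v}), t.Pairwise (· ≤ ·) → (∀ e ∈ t, c ≤ e) →
      Order.IsSuccLimit l → l < ω ^ c * ω → fs (tau t + l) x = tau t + fs l x := by
  intro t
  induction t with
  | nil => intro c l _ _ _ _; simp [tau]
  | cons e t' ih =>
      intro c l hs hmem hl hlt
      obtain ⟨hall, hs'⟩ := List.pairwise_cons.1 hs
      have hce : c ≤ e := hmem e (List.mem_cons_self)
      have hlb : l < ω ^ e * ω :=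
        lt_of_lt_of_le hlt (mul_le_mul_left (opow_le_opow_right omega0_pos hce) ω)
      have hee : ω ^ e * ω = ω ^ (e + 1) := by rw [opow_add, opow_one]
      have he1 : e < e + 1 := by
        rw [Ordinal.add_one_eq_succ]; exact Order.lt_succ e
      have hl2 : Order.IsSuccLimit (ω ^ e + l) := isSuccLimit_add _ hl
      have hlt2 : ω ^ e + l < ω ^ e * ω := by
        rw [hee]
        exact principal_add_omega0_opow (e + 1)
          ((opow_lt_opow_iff_right one_lt_omega0).2 he1) (hee ▸ hlb)
      have key : fs (tau t' + (ω ^ e + l)) x = tau t' + fs (ω ^ e + l) x :=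
        ih e (ω ^ e + l) hs' hall hl2 hlt2
      have hfs : fs (ω ^ e + l) x = ω ^ e + fs l x :=
        hfs3 e l x hl (lt_add_of_lt_mul_omega hlb)
      show fs (tau t' + ω ^ e + l) x = tau t' + ω ^ e + fs l x
      rw [add_assoc, key, hfs, add_assoc]

theorem fs_cons (fs : Ordinal.{v} → ℕ → Ordinal.{v})
    (hfs3 : ∀ (b l : Ordinal.{v}) (x : ℕ), Order.IsSuccLimit l → l < ω ^ b + l →
      fs (ω ^ b + l) x = ω ^ b + fs l x) (x : ℕ)
    (e : Ordinal.{v}) (R : List Ordinal.{v}) (hs : (e :: R).Pairwise (· ≤ ·)) (he : e ≠ 0) :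
    fs (tau (e :: R)) x = tau R + fs (ω ^ e) x := by
  obtain ⟨hall, hs'⟩ := List.pairwise_cons.1 hs
  have hlim : Order.IsSuccLimit (ω ^ e : Ordinal.{v}) := isSuccLimit_opow_left isSuccLimit_omega0 he
  have hlt : (ω ^ e : Ordinal.{v}) < ω ^ e * ω := by
    conv_lhs => rw [← mul_one (ω ^ e)]
    exact (mul_lt_mul_iff_right₀ (opow_pos _ omega0_pos)).2 one_lt_omega0
  exact fs_tau_add fs hfs3 x R e (ω ^ e) hs' hall hlim hlt

theorem tau_cons_isLimit (e : Ordinal.{v}) (R : List Ordinal.{v}) (he : e ≠ 0) :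
    Order.IsSuccLimit (tau (e :: R)) :=
  isSuccLimit_add _ (isSuccLimit_opow_left isSuccLimit_omega0 he)
abbrev St := ℕ × ℕ × List ℕ
def FL (s : St) : List Ordinal.{v} :=
  s.2.2.map (Nat.cast) ++ List.replicate s.2.1 ω ++ List.replicate s.1 (ω + 1)
noncomputable def val (s : St) : Ordinal.{v} := tau (FL s)
theorem tau_FL (a b : ℕ) (E : List ℕ) :
    val.{v} (a, b, E) = (ω ^ (ω+1) * a + ω ^ (ω:Ordinal.{v}) * b) + tau (E.map Nat.cast) := by
  show tau ((E.map Nat.cast ++ List.replicate b ω) ++ List.replicate a (ω + 1)) = _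
  rw [tau_append, tau_append, tau_replicate, tau_replicate, add_assoc]

theorem ord_sorted_replicate (n : ℕ) (a : Ordinal.{v}) :
    (List.replicate n a).Pairwise (· ≤ ·) := by
  induction n with
  | zero => simp
  | succ m ih =>
      rw [List.replicate_succ]
      exact List.pairwise_cons.2 ⟨fun b hb => (List.eq_of_mem_replicate hb).ge, ih⟩

theorem FL_sorted (s : St) (hs : s.2.2.Pairwise (· ≤ ·)) : (FL.{v} s).Pairwise (· ≤ ·) := by
  rw [FL]; rw [List.pairwise_append]
  refine ⟨?_, ?_, ?_⟩
  · rw [List.pairwise_append]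
    refine ⟨?_, ord_sorted_replicate _ _, ?_⟩
    · exact List.Pairwise.map _ (fun a b h => by exact_mod_cast h) hs
    · intro o ho w hw
      obtain ⟨n, _, rfl⟩ := List.mem_map.1 ho
      rw [List.eq_of_mem_replicate hw]
      exact (nat_lt_omega0 n).le
  · exact ord_sorted_replicate _ _
  · intro o ho w hw
    rw [List.eq_of_mem_replicate hw]
    rcases List.mem_append.1 ho with h | h
    · obtain ⟨n, _, rfl⟩ := List.mem_map.1 h
      exact ((nat_lt_omega0 n).trans (lt_add_one ω)).le
    · rw [List.eq_of_mem_replicate h]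
      exact (lt_add_one ω).le

theorem val_succ_case (a b : ℕ) (t : List ℕ) :
    val.{v} (a, b, 0 :: t) = val.{v} (a, b, t) + 1 := by
  show tau (((0:ℕ):Ordinal.{v}) :: FL.{v} (a, b, t)) = _
  rw [tau]
  simp [val]

section
variable (fs : Ordinal.{v} → ℕ → Ordinal.{v})
variable (hfs1 : ∀ (l : Ordinal.{v}) (x : ℕ), Order.IsSuccLimit l → fs (ω ^ l) x = ω ^ fs l x)
variable (hfs2 : ∀ (b : Ordinal.{v}) (x : ℕ), fs (ω ^ (b + 1)) x = ω ^ b * (x : Ordinal))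
variable (hfs3 : ∀ (b l : Ordinal.{v}) (x : ℕ), Order.IsSuccLimit l → l < ω ^ b + l →
      fs (ω ^ b + l) x = ω ^ b + fs l x)

include hfs2 hfs3 in
theorem case1 (a b k x : ℕ) (t : List ℕ) (hs : ((k+1) :: t : List ℕ).Pairwise (· ≤ ·)) :
    Order.IsSuccLimit (val.{v} (a, b, (k+1) :: t)) ∧
    fs (val.{v} (a, b, (k+1) :: t)) x = val.{v} (a, b, List.replicate x k ++ t) ∧
    val.{v} (a, b, List.replicate x k ++ t) < val.{v} (a, b, (k+1) :: t) := by
  have hFL : FL.{v} (a, b, (k+1) :: t) = (((k+1:ℕ)):Ordinal) :: FL.{v} (a, b, t) := by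
    simp [FL]
  have hsort : ((((k+1:ℕ)):Ordinal.{v}) :: FL.{v} (a, b, t)).Pairwise (· ≤ ·) := by
    rw [← hFL]; exact FL_sorted _ hs
  have hne : (((k+1:ℕ)):Ordinal.{v}) ≠ 0 := Nat.cast_ne_zero.2 (Nat.succ_ne_zero k)
  have hnew : val.{v} (a, b, List.replicate x k ++ t)
      = val.{v} (a, b, t) + ω ^ (k:Ordinal) * x := by
    rw [tau_FL, tau_FL, List.map_append, List.map_replicate, tau_append, tau_replicate]
    exact (add_assoc _ _ _).symm
  have hlt : ω ^ (k:Ordinal.{v}) * x < ω ^ (((k+1:ℕ)):Ordinal.{v}) := by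
    rw [Nat.cast_add_one, opow_add, opow_one]
    exact (mul_lt_mul_iff_right₀ (opow_pos _ omega0_pos)).2 (nat_lt_omega0 x)
  refine ⟨?_, ?_, ?_⟩
  · rw [val, hFL]; exact tau_cons_isLimit _ _ hne
  · rw [val, hFL, fs_cons fs hfs3 x _ _ hsort hne, Nat.cast_add_one, hfs2]
    exact hnew.symm
  · rw [hnew]
    have hv : val.{v} (a, b, (k+1) :: t)
        = tau (FL.{v} (a, b, t)) + ω ^ (((k+1:ℕ)):Ordinal.{v}) := by
      rw [val, hFL, tau]
    rw [hv]
    exact (add_lt_add_iff_left _).2 hlt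

include hfs1 hfs2 hfs3 in
theorem case2 (a b x : ℕ) :
    Order.IsSuccLimit (val.{v} (a, b+1, ([] : List ℕ))) ∧
    fs (val.{v} (a, b+1, ([] : List ℕ))) x = val.{v} (a, b, [x]) ∧
    val.{v} (a, b, [x]) < val.{v} (a, b+1, ([] : List ℕ)) := by
  have hFL : FL.{v} (a, b+1, ([] : List ℕ)) = ω :: FL.{v} (a, b, ([] : List ℕ)) := by
    simp [FL, List.replicate_succ]
  have hsort : ((ω : Ordinal.{v}) :: FL.{v} (a, b, ([] : List ℕ))).Pairwise (· ≤ ·) := by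
    rw [← hFL]; exact FL_sorted _ (by simp)
  have hne : (ω : Ordinal.{v}) ≠ 0 := omega0_ne_zero
  have hfsomega : fs ω x = (x : Ordinal) := by
    have homega : (ω:Ordinal.{v}) = ω ^ ((0:Ordinal) + 1) := by rw [zero_add, opow_one]
    rw [homega, hfs2]; simp
  have hnew : val.{v} (a, b, [x]) = val.{v} (a, b, ([] : List ℕ)) + ω ^ (x:Ordinal) := by
    rw [tau_FL, tau_FL]
    simp [tau, add_assoc]
  refine ⟨?_, ?_, ?_⟩
  · rw [val, hFL]; exact tau_cons_isLimit _ _ hne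
  · rw [val, hFL, fs_cons fs hfs3 x _ _ hsort hne,
      hfs1 ω x isSuccLimit_omega0, hfsomega]
    exact hnew.symm
  · rw [hnew]
    have hv : val.{v} (a, b+1, ([] : List ℕ))
        = tau (FL.{v} (a, b, ([] : List ℕ))) + ω ^ (ω:Ordinal.{v}) := by
      rw [val, hFL, tau]
    rw [hv]
    exact (add_lt_add_iff_left _).2
      ((opow_lt_opow_iff_right one_lt_omega0).2 (nat_lt_omega0 x))

include hfs2 hfs3 in
theorem case3 (a x : ℕ) :
    Order.IsSuccLimit (val.{v} (a+1, 0, ([] : List ℕ))) ∧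
    fs (val.{v} (a+1, 0, ([] : List ℕ))) x = val.{v} (a, x, ([] : List ℕ)) ∧
    val.{v} (a, x, ([] : List ℕ)) < val.{v} (a+1, 0, ([] : List ℕ)) := by
  have hFL : FL.{v} (a+1, 0, ([] : List ℕ)) = (ω+1) :: FL.{v} (a, 0, ([] : List ℕ)) := by
    simp [FL, List.replicate_succ]
  have hsort : ((ω+1 : Ordinal.{v}) :: FL.{v} (a, 0, ([] : List ℕ))).Pairwise (· ≤ ·) := by
    rw [← hFL]; exact FL_sorted _ (by simp)
  have hne : (ω+1 : Ordinal.{v}) ≠ 0 :=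
    ((omega0_pos.trans_le (le_self_add)).ne')
  have hnew : val.{v} (a, x, ([] : List ℕ))
      = val.{v} (a, 0, ([] : List ℕ)) + ω ^ (ω:Ordinal.{v}) * x := by
    rw [tau_FL, tau_FL]
    simp [tau, add_assoc]
  have hlt : ω ^ (ω:Ordinal.{v}) * x < ω ^ (ω + 1 : Ordinal.{v}) := by
    rw [opow_add, opow_one]
    exact (mul_lt_mul_iff_right₀ (opow_pos _ omega0_pos)).2 (nat_lt_omega0 x)
  refine ⟨?_, ?_, ?_⟩
  · rw [val, hFL]; exact tau_cons_isLimit _ _ hne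
  · rw [val, hFL, fs_cons fs hfs3 x _ _ hsort hne, hfs2]
    exact hnew.symm
  · rw [hnew]
    have hv : val.{v} (a+1, 0, ([] : List ℕ))
        = tau (FL.{v} (a, 0, ([] : List ℕ))) + ω ^ (ω + 1 : Ordinal.{v}) := by
      rw [val, hFL, tau]
    rw [hv]
    exact (add_lt_add_iff_left _).2 hlt

end
def W (E : List ℕ) (m : ℕ) : ℕ := (E.filter (fun e => m ≤ e)).length

theorem W_cons (e : ℕ) (t : List ℕ) (m : ℕ) :
    W (e :: t) m = W t m + if m ≤ e then 1 else 0 := by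
  by_cases h : m ≤ e <;> simp [W, List.filter_cons, h, Nat.add_comm]

theorem W_rec (E : List ℕ) (m : ℕ) : W E m = E.count m + W E (m+1) := by
  induction E with
  | nil => simp [W]
  | cons e t ih =>
      rw [W_cons, W_cons, List.count_cons, ih]
      by_cases h1 : e = m <;> by_cases h2 : m ≤ e <;> by_cases h3 : m + 1 ≤ e <;>
        simp [h1, h2, h3] <;> omega

theorem W_mono (E : List ℕ) {m e : ℕ} (h : m ≤ e) : W E e ≤ W E m := by
  simp only [W, ← List.countP_eq_length_filter]
  exact List.countP_mono_left (by intro a _ hd; simp at hd ⊢; omega)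

theorem W_le_length (E : List ℕ) (m : ℕ) : W E m ≤ E.length :=
  List.length_filter_le _ _

theorem count_le_W (E : List ℕ) (m : ℕ) : E.count m ≤ W E m := by
  rw [W_rec]; omega

theorem W_eq_of_counts : ∀ (f : ℕ) (n : ℕ) (E E' : List ℕ),
    (∀ j, n ≤ j → E.count j = E'.count j) →
    (∀ e ∈ E, e < n + f) → (∀ e ∈ E', e < n + f) → W E n = W E' n := by
  intro f
  induction f with
  | zero =>
      intro n E E' _ hE hE'
      have h1 : W E n = 0 := by
        simp only [W, List.length_eq_zero_iff, List.filter_eq_nil_iff]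
        intro a ha; have := hE a ha; simp; omega
      have h2 : W E' n = 0 := by
        simp only [W, List.length_eq_zero_iff, List.filter_eq_nil_iff]
        intro a ha; have := hE' a ha; simp; omega
      rw [h1, h2]
  | succ f ih =>
      intro n E E' hc hE hE'
      rw [W_rec E n, W_rec E' n, hc n le_rfl, ih (n+1) E E'
        (fun j hj => hc j (by omega)) (fun e he => by have := hE e he; omega)
        (fun e he => by have := hE' e he; omega)]

theorem W_le_of : ∀ (f c n : ℕ) (E : List ℕ),
    (∀ e ∈ E, e < n + f) → (∀ j, E.count j ≤ c) → W E n ≤ f * c := by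
  intro f
  induction f with
  | zero =>
      intro c n E hE _
      have h1 : W E n = 0 := by
        simp only [W, List.length_eq_zero_iff, List.filter_eq_nil_iff]
        intro a ha; have := hE a ha; simp; omega
      omega
  | succ f ih =>
      intro c n E hE hc
      rw [W_rec]
      have := ih c (n+1) E (fun e he => by have := hE e he; omega) hc
      have := hc n
      calc E.count n + W E (n+1) ≤ c + f * c := by omega
      _ = (f+1) * c := by ring

theorem le_foldr_max (E : List ℕ) : ∀ e ∈ E, e ≤ E.foldr max 0 := by
  induction E with
  | nil => simp
  | cons a t ih =>
      intro e he
      rcases List.mem_cons.1 he with rfl | h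
      · simp [List.foldr]
      · exact le_trans (ih e h) (by simp [List.foldr])

def rl (s : St) : List (WithTop ℕ × WithTop ℕ) :=
  ((s.2.1 : WithTop ℕ), ⊤) :: (⊤, (s.1 : WithTop ℕ)) ::
    s.2.2.map (fun e => (((s.2.1 + W s.2.2 e : ℕ) : WithTop ℕ), ((s.1 + e + 1 : ℕ) : WithTop ℕ)))

def Dset (s : St) : Set (ℕ × ℕ) :=
  ⋃ j : Fin (rl s).length, rect ((rl s).get j).1 ((rl s).get j).2

theorem mem_Dset_of {s : St} {p : ℕ × ℕ} {u v : WithTop ℕ} (hq : (u, v) ∈ rl s)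
    (h1 : (p.1 : WithTop ℕ) < u) (h2 : (p.2 : WithTop ℕ) < v) : p ∈ Dset s := by
  obtain ⟨k, hk⟩ := List.mem_iff_get.1 hq
  exact Set.mem_iUnion.2 ⟨k, by rw [hk]; exact ⟨h1, h2⟩⟩

theorem mem_Dset {p : ℕ × ℕ} {s : St} : p ∈ Dset s ↔
    p.1 < s.2.1 ∨ p.2 < s.1 ∨
      ∃ e ∈ s.2.2, p.1 < s.2.1 + W s.2.2 e ∧ p.2 < s.1 + e + 1 := by
  constructor
  · intro hp
    obtain ⟨j, hj⟩ := Set.mem_iUnion.1 hp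
    have hm : (rl s).get j ∈ rl s := List.get_mem (rl s) j
    obtain ⟨h1, h2⟩ := hj
    set q := (rl s).get j with hqdef
    clear_value q
    simp only [rl, List.mem_cons, List.mem_map] at hm
    rcases hm with rfl | rfl | ⟨e, he, rfl⟩
    · left; simpa using h1
    · right; left; simpa using h2
    · right; right; refine ⟨e, he, ?_, ?_⟩
      · simp only [Prod.fst] at h1; exact_mod_cast h1
      · simp only [Prod.snd] at h2; exact_mod_cast h2
  · rintro (h | h | ⟨e, he, h1, h2⟩)
    · exact mem_Dset_of (List.mem_cons_self) (by exact_mod_cast h) (WithTop.coe_lt_top _)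
    · exact mem_Dset_of (u := (⊤ : WithTop ℕ)) (v := (s.1 : WithTop ℕ)) (by simp [rl])
        (WithTop.coe_lt_top _) (by exact_mod_cast h)
    · refine mem_Dset_of (u := ((s.2.1 + W s.2.2 e : ℕ) : WithTop ℕ))
        (v := ((s.1 + e + 1 : ℕ) : WithTop ℕ)) ?_ (by exact_mod_cast h1) (by exact_mod_cast h2)
      simp only [rl, List.mem_cons, List.mem_map]
      right; right; exact ⟨e, he, rfl⟩

def Prec (s' s : St) : Prop :=
  s'.1 < s.1 ∨ (s'.1 = s.1 ∧ (s'.2.1 < s.2.1 ∨ (s'.2.1 = s.2.1 ∧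
    ∃ m, s'.2.2.count m < s.2.2.count m ∧ ∀ j, m < j → s'.2.2.count j = s.2.2.count j)))

theorem Prec_trans {s3 s2 s1 : St} (h32 : Prec s3 s2) (h21 : Prec s2 s1) : Prec s3 s1 := by
  rcases h32 with h | ⟨ha32, h⟩
  · rcases h21 with h' | ⟨ha21, h'⟩
    · exact Or.inl (h.trans h')
    · exact Or.inl (ha21 ▸ h)
  · rcases h21 with h' | ⟨ha21, h'⟩
    · exact Or.inl (ha32 ▸ h')
    · refine Or.inr ⟨ha32.trans ha21, ?_⟩
      rcases h with hb | ⟨hb32, hc⟩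
      · rcases h' with hb' | ⟨hb21, _⟩
        · exact Or.inl (hb.trans hb')
        · exact Or.inl (hb21 ▸ hb)
      · rcases h' with hb' | ⟨hb21, hc'⟩
        · exact Or.inl (hb32 ▸ hb')
        · refine Or.inr ⟨hb32.trans hb21, ?_⟩
          obtain ⟨m2, hm2, hab2⟩ := hc
          obtain ⟨m1, hm1, hab1⟩ := hc'
          rcases lt_trichotomy m2 m1 with h | rfl | h
          · exact ⟨m1, by rw [hab2 m1 h]; exact hm1, fun j hj => by
              rw [hab2 j (h.trans hj), hab1 j hj]⟩
          · exact ⟨m2, hm2.trans hm1, fun j hj => by rw [hab2 j hj, hab1 j hj]⟩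
          · exact ⟨m2, by rw [← hab1 m2 h]; exact hm2, fun j hj => by
              rw [hab2 j hj, hab1 j (h.trans hj)]⟩

theorem Prec_a_le {s' s : St} (h : Prec s' s) : s'.1 ≤ s.1 := by
  rcases h with h | ⟨h, _⟩
  · exact h.le
  · exact h.le

theorem witness {s' s : St} (h : Prec s' s) :
    ∃ p : ℕ × ℕ, p ∈ Dset s ∧ p ∉ Dset s' := by
  obtain ⟨a, b, E⟩ := s
  obtain ⟨a', b', E'⟩ := s'
  simp only [Prec] at h
  rcases h with h | ⟨rfl, h | ⟨rfl, m, hm, hab⟩⟩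
  · -- a' < a
    refine ⟨(b' + E'.length, a - 1), ?_, ?_⟩
    · rw [mem_Dset]; right; left; show a - 1 < a; omega
    · intro hmem
      rcases mem_Dset.1 hmem with h1 | h1 | ⟨e, he, h1, h2⟩
      · simp at h1
      · simp only [] at h1; omega
      · have := W_le_length E' e
        simp only [] at h1
        omega
  · -- b' < b  (common first coordinate is now named a')
    refine ⟨(b - 1, a' + E'.foldr max 0 + 1), ?_, ?_⟩
    · rw [mem_Dset]; left; show b - 1 < b; omega
    · intro hmem
      rcases mem_Dset.1 hmem with h1 | h1 | ⟨e, he, h1, h2⟩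
      · simp only [] at h1; omega
      · simp only [] at h1; omega
      · have := le_foldr_max E' e he
        simp only [] at h2
        omega
  · -- count case (common coords a', b')
    have hWm : W E' m < W E m := by
      rw [W_rec E m, W_rec E' m]
      have : W E (m+1) = W E' (m+1) := by
        apply W_eq_of_counts ((E.foldr max 0) + (E'.foldr max 0) + 1) (m+1) E E'
        · intro j hj; exact (hab j (by omega)).symm
        · intro e he; have := le_foldr_max E e he; omega
        · intro e he; have := le_foldr_max E' e he; omega
      omega
    have hmemE : m ∈ E := List.count_pos_iff.1 (by omega)
    have hW1 : 1 ≤ W E m := le_trans (by omega) (count_le_W E m)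
    refine ⟨(b' + W E m - 1, a' + m), ?_, ?_⟩
    · rw [mem_Dset]; right; right
      refine ⟨m, hmemE, ?_, ?_⟩
      · show b' + W E m - 1 < b' + W E m; omega
      · show a' + m < a' + m + 1; omega
    · intro hmem
      rcases mem_Dset.1 hmem with h1 | h1 | ⟨e, he, h1, h2⟩
      · simp only [] at h1; omega
      · simp only [] at h1; omega
      · simp only [] at h1 h2
        rcases Nat.lt_or_ge e m with hem | hem
        · omega
        · have := W_mono E' hem
          omega

theorem isLowerSet_Dset (s : St) : IsLowerSet (Dset s) := by
  apply isLowerSet_iUnion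
  intro j
  intro p q hle hp
  obtain ⟨h1, h2⟩ := hp
  constructor
  · exact lt_of_le_of_lt (by exact_mod_cast hle.1) h1
  · exact lt_of_le_of_lt (by exact_mod_cast hle.2) h2
def Inv (a b : ℕ) (E : List ℕ) (x : ℕ) : Prop :=
  a ≤ x + 1 ∧ b ≤ x ∧ E.Pairwise (· ≤ ·) ∧
    (∀ e ∈ E, e < x) ∧ (∀ j, E.count j ≤ x)

theorem nat_sorted_replicate (n a : ℕ) : (List.replicate n a).Pairwise (· ≤ ·) := by
  induction n with
  | zero => simp
  | succ m ih =>
      rw [List.replicate_succ]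
      exact List.pairwise_cons.2 ⟨fun b hb => (List.eq_of_mem_replicate hb).ge, ih⟩

theorem step0 {a b x : ℕ} {t : List ℕ} (h : Inv a b (0 :: t) x) :
    Inv a b t (x+1) ∧ Prec (a, b, t) (a, b, 0 :: t) := by
  obtain ⟨h1, h2, h3, h4, h5⟩ := h
  refine ⟨⟨by omega, by omega, (List.pairwise_cons.1 h3).2, ?_, ?_⟩, ?_⟩
  · intro e he; have := h4 e (List.mem_cons_of_mem _ he); omega
  · intro j; have := h5 j; rw [List.count_cons] at this; omega
  · right; refine ⟨rfl, ?_⟩; right; refine ⟨rfl, 0, ?_, ?_⟩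
    · simp only [List.count_cons, beq_iff_eq]
      simp
    · intro j hj
      simp only [List.count_cons, beq_iff_eq]
      split_ifs <;> omega

theorem step1 {a b k x : ℕ} {t : List ℕ} (h : Inv a b ((k+1) :: t) x) :
    Inv a b (List.replicate x k ++ t) (x+1) ∧
      Prec (a, b, List.replicate x k ++ t) (a, b, (k+1) :: t) := by
  obtain ⟨h1, h2, h3, h4, h5⟩ := h
  obtain ⟨hall, ht⟩ := List.pairwise_cons.1 h3
  have hk1 : k + 1 < x := h4 (k+1) (List.mem_cons_self)
  have hknt : k ∉ t := fun hmem => by have := hall k hmem; omega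
  have hct : t.count k = 0 := List.count_eq_zero.2 hknt
  refine ⟨⟨by omega, by omega, ?_, ?_, ?_⟩, ?_⟩
  · rw [List.pairwise_append]
    refine ⟨nat_sorted_replicate _ _, ht, ?_⟩
    intro e1 he1 e2 he2
    rw [List.eq_of_mem_replicate he1]
    have := hall e2 he2; omega
  · intro e he
    rcases List.mem_append.1 he with he | he
    · rw [List.eq_of_mem_replicate he]; omega
    · have := h4 e (List.mem_cons_of_mem _ he); omega
  · intro j
    have hj5 := h5 j
    rw [List.count_cons] at hj5
    simp only [beq_iff_eq] at hj5
    rw [List.count_append, List.count_replicate]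
    by_cases hjk : j = k
    · subst hjk
      simp [hct]
    · simp only [beq_iff_eq, if_neg (Ne.symm hjk), if_neg hjk]
      split_ifs at hj5 <;> omega
  · right; refine ⟨rfl, ?_⟩; right; refine ⟨rfl, k+1, ?_, ?_⟩
    · rw [List.count_append, List.count_replicate, List.count_cons]
      simp only [beq_iff_eq]
      split_ifs <;> omega
    · intro j hj
      rw [List.count_append, List.count_replicate, List.count_cons]
      simp only [beq_iff_eq]
      split_ifs <;> omega

theorem step2 {a b x : ℕ} (h : Inv a (b+1) ([]:List ℕ) x) :
    Inv a b [x] (x+1) ∧ Prec (a, b, [x]) (a, b+1, ([]:List ℕ)) := by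
  obtain ⟨h1, h2, h3, h4, h5⟩ := h
  refine ⟨⟨by omega, by omega, by simp, ?_, ?_⟩, ?_⟩
  · intro e he; simp at he; omega
  · intro j
    simp only [List.count_singleton, beq_iff_eq]
    split_ifs <;> omega
  · right; exact ⟨rfl, Or.inl (show b < b + 1 by omega)⟩

theorem step3 {a x : ℕ} (h : Inv (a+1) 0 ([]:List ℕ) x) :
    Inv a x ([]:List ℕ) (x+1) ∧ Prec (a, x, ([]:List ℕ)) (a+1, 0, ([]:List ℕ)) := by
  obtain ⟨h1, h2, h3, h4, h5⟩ := h
  refine ⟨⟨by omega, by omega, by simp, by simp, by simp⟩, ?_⟩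
  · left; show a < a + 1; omega

theorem Inv_bnd {a b : ℕ} {E : List ℕ} {x : ℕ} (h : Inv a b E x)
    (q : WithTop ℕ × WithTop ℕ) (hq : q ∈ rl (a, b, E)) :
    (∀ c : ℕ, q.1 = (c : WithTop ℕ) → c ≤ (x+1)^2) ∧
    (∀ c : ℕ, q.2 = (c : WithTop ℕ) → c ≤ (x+1)^2) := by
  obtain ⟨h1, h2, h3, h4, h5⟩ := h
  have hsq : (x+1)^2 = x*x + 2*x + 1 := by ring
  have hW0 : W E 0 ≤ x * x := W_le_of x x 0 E (by intro e he; have := h4 e he; omega) h5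
  simp only [rl, List.mem_cons, List.mem_map] at hq
  rcases hq with rfl | rfl | ⟨e, he, rfl⟩
  · refine ⟨?_, ?_⟩
    · intro c hc
      simp only [] at hc
      have : b = c := by exact_mod_cast hc
      omega
    · intro c hc
      simp only [] at hc
      exact absurd hc.symm (WithTop.coe_ne_top)
  · refine ⟨?_, ?_⟩
    · intro c hc
      simp only [] at hc
      exact absurd hc.symm (WithTop.coe_ne_top)
    · intro c hc
      simp only [] at hc
      have : a = c := by exact_mod_cast hc
      omega
  · have hWe : W E e ≤ W E 0 := W_mono _ (Nat.zero_le e)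
    have hex : e < x := h4 e he
    refine ⟨?_, ?_⟩
    · intro c hc
      simp only [] at hc
      have : b + W E e = c := by exact_mod_cast hc
      omega
    · intro c hc
      simp only [] at hc
      have : a + e + 1 = c := by exact_mod_cast hc
      omega
theorem glue (H : Ordinal.{v} → ℕ → ℕ) (o₀ : Ordinal.{v}) (s s' : St) (x L' : ℕ)
    (T' : Fin L' → St)
    (hH : H o₀ x = H (val.{v} s') (x+1))
    (hHL' : H (val.{v} s') (x+1) = (x+1) + L')
    (hT'0 : ∀ h : 0 < L', T' ⟨0, h⟩ = s')
    (hInv' : ∀ i : Fin L', Inv (T' i).1 (T' i).2.1 (T' i).2.2 (x+1+i))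
    (hPrec' : ∀ i j : Fin L', i < j → Prec (T' j) (T' i))
    (hstep : Prec s' s) (hInvs : Inv s.1 s.2.1 s.2.2 x) :
    ∃ (L : ℕ) (T : Fin L → St), H o₀ x = x + L ∧ (∀ h : 0 < L, T ⟨0, h⟩ = s) ∧
      (∀ i : Fin L, Inv (T i).1 (T i).2.1 (T i).2.2 (x + i)) ∧
      (∀ i j : Fin L, i < j → Prec (T j) (T i)) := by
  refine ⟨L' + 1, Fin.cons s T', by rw [hH, hHL']; omega, fun h => Fin.cons_zero _ _, ?_, ?_⟩
  · intro i
    rcases Fin.eq_zero_or_eq_succ i with rfl | ⟨i', rfl⟩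
    · rw [Fin.cons_zero]
      simpa using hInvs
    · have h2 : x + ((i'.succ : Fin (L'+1)) : ℕ) = x + 1 + i' := by
        simp [Fin.val_succ]; omega
      rw [Fin.cons_succ, h2]
      exact hInv' i'
  · intro i j hij
    rcases Fin.eq_zero_or_eq_succ i with rfl | ⟨i', rfl⟩
    · rcases Fin.eq_zero_or_eq_succ j with rfl | ⟨j', rfl⟩
      · exact absurd hij (lt_irrefl _)
      · rw [Fin.cons_zero, Fin.cons_succ]
        by_cases hj0 : j' = ⟨0, j'.pos⟩
        · rw [hj0, hT'0]; exact hstep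
        · have hlt : (⟨0, j'.pos⟩ : Fin L') < j' := by
            rw [Fin.lt_def]
            have : j'.1 ≠ 0 := fun hc => hj0 (Fin.ext hc)
            simpa using Nat.pos_of_ne_zero this
          have hp := hPrec' ⟨0, j'.pos⟩ j' hlt
          rw [hT'0] at hp
          exact Prec_trans hp hstep
    · rcases Fin.eq_zero_or_eq_succ j with rfl | ⟨j', rfl⟩
      · exact absurd hij (by simp [Fin.lt_def])
      · rw [Fin.cons_succ, Fin.cons_succ]
        exact hPrec' i' j' (by rwa [Fin.succ_lt_succ_iff] at hij)
theorem main (fs : Ordinal.{v} → ℕ → Ordinal.{v})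
    (hfs1 : ∀ (l : Ordinal.{v}) (x : ℕ), Order.IsSuccLimit l → fs (ω ^ l) x = ω ^ fs l x)
    (hfs2 : ∀ (b : Ordinal.{v}) (x : ℕ), fs (ω ^ (b + 1)) x = ω ^ b * (x : Ordinal))
    (hfs3 : ∀ (b l : Ordinal.{v}) (x : ℕ), Order.IsSuccLimit l → l < ω ^ b + l →
      fs (ω ^ b + l) x = ω ^ b + fs l x)
    (H : Ordinal.{v} → ℕ → ℕ) (hH0 : ∀ x, H 0 x = x)
    (hHs : ∀ (a : Ordinal.{v}) (x : ℕ), H (a + 1) x = H a (x + 1))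
    (hHl : ∀ (a : Ordinal.{v}) (x : ℕ), Order.IsSuccLimit a → H a x = H (fs a x) (x + 1)) :
    ∀ (o : Ordinal.{v}) (a b : ℕ) (E : List ℕ) (x : ℕ), val.{v} (a, b, E) = o →
      Inv a b E x →
      ∃ (L : ℕ) (T : Fin L → St), H (val.{v} (a, b, E)) x = x + L ∧
        (∀ h : 0 < L, T ⟨0, h⟩ = (a, b, E)) ∧
        (∀ i : Fin L, Inv (T i).1 (T i).2.1 (T i).2.2 (x + i)) ∧
        (∀ i j : Fin L, i < j → Prec (T j) (T i)) := by
  intro o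
  induction o using Ordinal.induction with
  | h o IH =>
    intro a b E x hval hInv
    rcases E with _ | ⟨e, t⟩
    · rcases b with _ | b
      · rcases a with _ | a
        · refine ⟨0, Fin.elim0, ?_, fun h => absurd h (lt_irrefl 0),
            fun i => i.elim0, fun i => i.elim0⟩
          have hv : val.{v} (0, 0, ([]:List ℕ)) = 0 := by
            simp [val, FL, tau]
          rw [hv, hH0]; omega
        · obtain ⟨hlim, hfseq, hdec⟩ := case3 fs hfs2 hfs3 a x
          have hstep := step3 hInv
          obtain ⟨L', T', h1, h2, h3, h4⟩ := IH _ (hval ▸ hdec) a x [] (x+1) rfl hstep.1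
          exact glue H _ (a+1, 0, []) (a, x, []) x L' T'
            (by rw [hHl _ x hlim, hfseq]) h1 h2 h3 h4 hstep.2 hInv
      · obtain ⟨hlim, hfseq, hdec⟩ := case2 fs hfs1 hfs2 hfs3 a b x
        have hstep := step2 hInv
        obtain ⟨L', T', h1, h2, h3, h4⟩ := IH _ (hval ▸ hdec) a b [x] (x+1) rfl hstep.1
        exact glue H _ (a, b+1, []) (a, b, [x]) x L' T'
          (by rw [hHl _ x hlim, hfseq]) h1 h2 h3 h4 hstep.2 hInv
    · rcases e with _ | k
      · have hstep := step0 hInv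
        have hvlt : val.{v} (a, b, t) < o := by
          rw [← hval, val_succ_case, Ordinal.add_one_eq_succ]
          exact Order.lt_succ _
        obtain ⟨L', T', h1, h2, h3, h4⟩ := IH _ hvlt a b t (x+1) rfl hstep.1
        exact glue H _ (a, b, 0 :: t) (a, b, t) x L' T'
          (by rw [val_succ_case, hHs]) h1 h2 h3 h4 hstep.2 hInv
      · obtain ⟨hlim, hfseq, hdec⟩ := case1 fs hfs2 hfs3 a b k x t hInv.2.2.1
        have hstep := step1 hInv
        obtain ⟨L', T', h1, h2, h3, h4⟩ :=
          IH _ (hval ▸ hdec) a b (List.replicate x k ++ t) (x+1) rfl hstep.1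
        exact glue H _ (a, b, (k+1) :: t) (a, b, List.replicate x k ++ t) x L' T'
          (by rw [hHl _ x hlim, hfseq]) h1 h2 h3 h4 hstep.2 hInv
end S16

/-- For every K there is a sequence (D_i)_{i=1}^L of lower sets of ℕ² of length
L ≥ H_{ω^{ω+2}}(K) - K, each a finite union of intervals with finite sides ≤ (K+i)²,
with D_i ⊄ D_j for i < j.  Here H is the Hardy hierarchy determined by the standard
fundamental sequences fs. -/
theorem stmt16
    (fs : Ordinal → ℕ → Ordinal)
    (hfs1 : ∀ (l : Ordinal) (x : ℕ), Order.IsSuccLimit l →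
      fs (Ordinal.omega0 ^ l) x = Ordinal.omega0 ^ fs l x)
    (hfs2 : ∀ (b : Ordinal) (x : ℕ),
      fs (Ordinal.omega0 ^ (b + 1)) x = Ordinal.omega0 ^ b * (x : Ordinal))
    (hfs3 : ∀ (b l : Ordinal) (x : ℕ), Order.IsSuccLimit l → l < Ordinal.omega0 ^ b + l →
      fs (Ordinal.omega0 ^ b + l) x = Ordinal.omega0 ^ b + fs l x)
    (H : Ordinal → ℕ → ℕ)
    (hH0 : ∀ x, H 0 x = x)
    (hHs : ∀ (a : Ordinal) (x : ℕ), H (a + 1) x = H a (x + 1))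
    (hHl : ∀ (a : Ordinal) (x : ℕ), Order.IsSuccLimit a → H a x = H (fs a x) (x + 1))
    (K : ℕ) :
    ∃ (L : ℕ) (D : Fin L → Set (ℕ × ℕ)),
      H (Ordinal.omega0 ^ (Ordinal.omega0 + 2)) K - K ≤ L ∧
      (∀ i, IsLowerSet (D i)) ∧
      (∀ i : Fin L, ∃ (n : ℕ) (u v : Fin n → WithTop ℕ),
        D i = ⋃ j : Fin n, rect (u j) (v j) ∧
        ∀ j : Fin n,
          (∀ a : ℕ, u j = (a : WithTop ℕ) → a ≤ (K + (i : ℕ) + 1) ^ 2) ∧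
          (∀ a : ℕ, v j = (a : WithTop ℕ) → a ≤ (K + (i : ℕ) + 1) ^ 2)) ∧
      (∀ i j : Fin L, i < j → ¬ D i ⊆ D j) := by
  have hInv0 : S16.Inv K 0 [] (K+1) := ⟨by omega, by omega, by simp, by simp, by simp⟩
  obtain ⟨L', T', h1, h2, h3, h4⟩ :=
    S16.main fs hfs1 hfs2 hfs3 H hH0 hHs hHl (S16.val (K, 0, [])) K 0 [] (K+1) rfl hInv0
  have h2eq : (Ordinal.omega0 + 2 : Ordinal) = (Ordinal.omega0 + 1) + 1 := by
    rw [add_assoc, one_add_one_eq_two]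
  have hne : (Ordinal.omega0 + 2 : Ordinal) ≠ 0 := by
    rw [h2eq]
    exact (lt_of_lt_of_le Ordinal.omega0_pos
      (le_trans le_self_add le_self_add)).ne'
  have hlim : Order.IsSuccLimit (Ordinal.omega0 ^ (Ordinal.omega0 + 2) : Ordinal) :=
    Ordinal.isSuccLimit_opow_left Ordinal.isSuccLimit_omega0 hne
  have hv : S16.val (K, 0, ([]:List ℕ)) = Ordinal.omega0 ^ (Ordinal.omega0 + 1) * K := by
    rw [S16.tau_FL]; simp [S16.tau]
  have hstart : H (Ordinal.omega0 ^ (Ordinal.omega0 + 2)) K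
      = H (S16.val (K, 0, ([]:List ℕ))) (K+1) := by
    rw [hHl _ K hlim, h2eq, hfs2, hv]
  obtain ⟨L, T, g1, g2, g3, g4⟩ :=
    S16.glue H (Ordinal.omega0 ^ (Ordinal.omega0 + 2)) (K+1, 0, []) (K, 0, []) K L' T'
      hstart h1 h2 h3 h4 (Or.inl (show K < K+1 by omega))
      ⟨show K+1 ≤ K+1 from le_rfl, show (0:ℕ) ≤ K from Nat.zero_le K, by simp, by simp, by simp⟩
  refine ⟨L, fun i => S16.Dset (T i), by rw [g1]; omega, ?_, ?_, ?_⟩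
  · intro i; exact S16.isLowerSet_Dset (T i)
  · intro i
    refine ⟨(S16.rl (T i)).length, fun j => ((S16.rl (T i)).get j).1,
      fun j => ((S16.rl (T i)).get j).2, rfl, ?_⟩
    intro j
    exact S16.Inv_bnd (g3 i) ((S16.rl (T i)).get j) (List.get_mem _ j)
  · intro i j hij hsub
    obtain ⟨p, hp, hnp⟩ := S16.witness (g4 i j hij)
    exact hnp (hsub hp)
end

section
/- For every K ∈ ℕ there exists a sequence (I_i)_{i=1}^{L} of monomial ideals in F[X,Y] (F a field) with L ≥ H_{ω^{ω+2}}(K) − K, such that deg(I_i) ≤ (K+i)² for all 1 ≤ i ≤ L, and for all i < j the ideal I_j is not contained in I_i. -/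
open Ordinal

universe u

namespace Stmt17Aux

/-- sum of ω-powers of a list of exponents -/
noncomputable def sumPow (l : List Ordinal) : Ordinal := (l.map (fun e => omega0 ^ e)).sum

@[simp] lemma sumPow_nil : sumPow [] = 0 := rfl
@[simp] lemma sumPow_cons (e : Ordinal) (l : List Ordinal) :
    sumPow (e :: l) = omega0 ^ e + sumPow l := rfl

lemma sumPow_append (l m : List Ordinal) : sumPow (l ++ m) = sumPow l + sumPow m := by
  induction l with
  | nil => simp
  | cons e l ih => simp [ih, add_assoc]

lemma sumPow_replicate (n : ℕ) (e : Ordinal) : sumPow (List.replicate n e) = omega0 ^ e * n := by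
  induction n with
  | zero => simp
  | succ n ih =>
    rw [List.replicate_succ, sumPow_cons, ih]
    have h : ((n+1:ℕ) : Ordinal) = 1 + n := by rw [Ordinal.one_add_natCast]; push_cast; rfl
    rw [h, mul_add, mul_one]

end Stmt17Aux

namespace Stmt17Aux

lemma lt_add_self {t e : Ordinal} (h : t < omega0 ^ (e + 1)) : t < omega0 ^ e + t := by
  by_contra hc
  push_neg at hc
  have key : ∀ n : ℕ, omega0 ^ e * n + t ≤ t := by
    intro n
    induction n with
    | zero => simp
    | succ n ih =>
      have : ((n+1:ℕ) : Ordinal) = (n : Ordinal) + 1 := by push_cast; rfl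
      rw [this, mul_add, mul_one, add_assoc]
      calc omega0 ^ e * n + (omega0 ^ e + t) ≤ omega0 ^ e * n + t :=
            add_le_add_right hc _
        _ ≤ t := ih
  have h2 : omega0 ^ (e + 1) ≤ t := by
    have hs : omega0 ^ (e+1) = omega0 ^ e * omega0 := by rw [opow_add, opow_one]
    rw [hs, mul_le_iff_of_isSuccLimit isSuccLimit_omega0]
    intro b hb
    obtain ⟨n, rfl⟩ := lt_omega0.1 hb
    calc omega0 ^ e * n ≤ omega0 ^ e * n + t := le_self_add
      _ ≤ t := key n
  exact absurd (h.trans_le h2) (lt_irrefl t)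

lemma sumPow_add_lt {l : List Ordinal} {t e : Ordinal} (hl : ∀ e' ∈ l, e' ≤ e)
    (ht : t < omega0 ^ (e + 1)) : sumPow l + t < omega0 ^ (e + 1) := by
  induction l with
  | nil => simpa using ht
  | cons e' l ih =>
    rw [sumPow_cons, add_assoc]
    refine principal_add_omega0_opow (e+1) ?_ (ih fun a ha => hl a (List.mem_cons_of_mem _ ha))
    have he : e < e + 1 := by rw [Ordinal.add_one_eq_succ]; exact Order.lt_succ e
    exact (opow_lt_opow_iff_right one_lt_omega0).2
      ((hl e' (List.mem_cons_self)).trans_lt he)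

lemma fs_sumPow_add (fs : Ordinal → ℕ → Ordinal)
    (hfs3 : ∀ (b l : Ordinal) (x : ℕ), Order.IsSuccLimit l → l < omega0 ^ b + l →
      fs (omega0 ^ b + l) x = omega0 ^ b + fs l x)
    (l : List Ordinal) (t : Ordinal) (x : ℕ) (ht : Order.IsSuccLimit t)
    (hsort : List.Pairwise (fun a b => b ≤ a) l) (hsm : ∀ e ∈ l, t < omega0 ^ (e + 1)) :
    fs (sumPow l + t) x = sumPow l + fs t x := by
  induction l with
  | nil => simp
  | cons e l ih =>
    have hle : ∀ e' ∈ l, e' ≤ e := fun e' he' => (List.pairwise_cons.1 hsort).1 e' he'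
    have hlt : sumPow l + t < omega0 ^ e + (sumPow l + t) :=
      lt_add_self (sumPow_add_lt hle (hsm e (List.mem_cons_self)))
    rw [sumPow_cons, add_assoc, hfs3 e _ x (isSuccLimit_add _ ht) hlt,
      ih (List.pairwise_cons.1 hsort).2 (fun a ha => hsm a (List.mem_cons_of_mem _ ha)), add_assoc]

end Stmt17Aux

namespace Stmt17Aux

/-- exponent list of a code -/
noncomputable def expList (s c : ℕ) (μ : List ℕ) : List Ordinal :=
  List.replicate s (omega0 + 1) ++ List.replicate c omega0 ++ μ.map (fun a : ℕ => (a : Ordinal))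

/-- ordinal value of a code -/
noncomputable def val (s c : ℕ) (μ : List ℕ) : Ordinal := sumPow (expList s c μ)

noncomputable def T (μ : List ℕ) : Ordinal := sumPow (μ.map (fun a : ℕ => (a : Ordinal)))

lemma val_eq (s c : ℕ) (μ : List ℕ) :
    val s c μ = omega0 ^ (omega0 + 1) * s + (omega0 ^ omega0 * c + T μ) := by
  rw [val, expList, sumPow_append, sumPow_append, sumPow_replicate, sumPow_replicate, T, add_assoc]

lemma T_lt (μ : List ℕ) : T μ < omega0 ^ omega0 := by
  rw [T]
  induction μ with
  | nil => simpa using opow_pos omega0 omega0_pos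
  | cons a μ ih =>
    simp only [List.map_cons, sumPow_cons]
    exact principal_add_omega0_opow _
      ((opow_lt_opow_iff_right one_lt_omega0).2 (nat_lt_omega0 a)) ih

lemma mid_lt (c : ℕ) (μ : List ℕ) : omega0 ^ omega0 * c + T μ < omega0 ^ (omega0 + 1) := by
  have h1 : omega0 ^ omega0 * c + T μ < omega0 ^ omega0 * c + omega0 ^ omega0 :=
    add_lt_add_right (T_lt μ) _
  have h2 : omega0 ^ omega0 * c + omega0 ^ omega0 = omega0 ^ omega0 * (c + 1 : ℕ) := by
    push_cast
    rw [mul_add, mul_one]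
  rw [h2] at h1
  refine h1.trans_le ?_
  rw [opow_add, opow_one]
  exact mul_le_mul_right (nat_lt_omega0 (c+1)).le _

/-- generators of the staircase of a code -/
def gens : ℕ → ℕ → List ℕ → List (ℕ × ℕ)
  | s, c, [] => [(s, c)]
  | s, c, a :: μ => (s, c + a + 1) :: gens (s+1) c μ

lemma gens_fst_ge : ∀ (s c : ℕ) (μ : List ℕ) (g : ℕ × ℕ), g ∈ gens s c μ → s ≤ g.1
  | s, c, [], g, hg => by simp [gens] at hg; simp [hg]
  | s, c, a :: μ, g, hg => by
    rcases List.mem_cons.1 hg with h | h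
    · simp [h]
    · exact (Nat.le_succ s).trans (gens_fst_ge (s+1) c μ g h)

lemma gens_snd_ge : ∀ (s c : ℕ) (μ : List ℕ) (g : ℕ × ℕ), g ∈ gens s c μ → c ≤ g.2
  | s, c, [], g, hg => by simp [gens] at hg; simp [hg]
  | s, c, a :: μ, g, hg => by
    rcases List.mem_cons.1 hg with h | h
    · simp [h]; omega
    · exact gens_snd_ge (s+1) c μ g h

lemma gens_last_mem : ∀ (s c : ℕ) (μ : List ℕ), (s + μ.length, c) ∈ gens s c μ
  | s, c, [] => by simp [gens]
  | s, c, a :: μ => by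
    have := gens_last_mem (s+1) c μ
    simp only [gens, List.length_cons]
    refine List.mem_cons_of_mem _ ?_
    convert this using 2
    omega

lemma gens_fst_s_mem : ∀ (s c : ℕ) (μ : List ℕ), ∃ y, (s, y) ∈ gens s c μ
  | s, c, [] => ⟨c, by simp [gens]⟩
  | s, c, a :: μ => ⟨c + a + 1, by simp [gens]⟩

lemma gens_mem_char : ∀ (s c : ℕ) (μ : List ℕ) (g : ℕ × ℕ), g ∈ gens s c μ →
    g = (s + μ.length, c) ∨ ∃ j, ∃ hj : j < μ.length, g = (s + j, c + μ.get ⟨j, hj⟩ + 1)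
  | s, c, [], g, hg => by simp [gens] at hg; left; simp [hg]
  | s, c, a :: μ, g, hg => by
    rcases List.mem_cons.1 hg with h | h
    · right; exact ⟨0, by simp, by simpa using h⟩
    · rcases gens_mem_char (s+1) c μ g h with h1 | ⟨j, hj, h2⟩
      · left; rw [h1]; simp; omega
      · right
        refine ⟨j+1, by simpa using hj, ?_⟩
        rw [h2]
        simp only [List.length_cons, List.get_cons_succ]
        have : s + 1 + j = s + (j + 1) := by omega
        rw [this]
    
lemma gens_mem_of_lt : ∀ (s c : ℕ) (μ : List ℕ) (j : ℕ) (hj : j < μ.length),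
    (s + j, c + μ.get ⟨j, hj⟩ + 1) ∈ gens s c μ
  | s, c, a :: μ, 0, hj => by simp [gens]
  | s, c, a :: μ, j+1, hj => by
    have := gens_mem_of_lt (s+1) c μ j (by simpa using hj)
    simp only [gens]
    refine List.mem_cons_of_mem _ ?_
    convert this using 2
    omega
    rfl

end Stmt17Aux

namespace Stmt17Aux

lemma gens_snd_le_c (s c : ℕ) (μ : List ℕ) (g : ℕ × ℕ) (hg : g ∈ gens s c μ)
    (h2 : g.2 ≤ c) : g = (s + μ.length, c) := by
  rcases gens_mem_char s c μ g hg with h | ⟨j, hj, h⟩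
  · exact h
  · rw [h] at h2; simp at h2

lemma gens_deg (s c : ℕ) (μ : List ℕ) (hsort : List.Pairwise (fun a b => b ≤ a) μ)
    (g : ℕ × ℕ) (hg : g ∈ gens s c μ) : g.1 + g.2 ≤ s + c + μ.length + μ.headD 0 + 1 := by
  rcases gens_mem_char s c μ g hg with h | ⟨j, hj, h⟩
  · rw [h]; simp; omega
  · rw [h]
    simp only
    have hj0 : μ.get ⟨j, hj⟩ ≤ μ.headD 0 := by
      rcases μ with _ | ⟨a, ν⟩
      · simp at hj
      · rcases j with _ | j
        · simp
        · simp only [List.headD_cons]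
          have := (List.pairwise_iff_get.1 hsort) ⟨0, by simp⟩ ⟨j+1, hj⟩
            (by simp [Fin.lt_def])
          simpa using this
    omega

lemma T_le_of_pointwise : ∀ (μ' μ : List ℕ), μ'.length ≤ μ.length →
    (∀ j (h1 : j < μ'.length) (h2 : j < μ.length), μ'.get ⟨j, h1⟩ ≤ μ.get ⟨j, h2⟩) →
    T μ' ≤ T μ
  | [], μ, _, _ => by simp [T]
  | a' :: μ', [], h, _ => by simp at h
  | a' :: μ', a :: μ, hlen, hpt => by
    have h0 : a' ≤ a := by simpa using hpt 0 (by simp) (by simp)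
    have ih := T_le_of_pointwise μ' μ (by simpa using hlen)
      (fun j h1 h2 => by simpa using hpt (j+1) (by simpa using h1) (by simpa using h2))
    simp only [T, List.map_cons, sumPow_cons] at *
    exact add_le_add (opow_le_opow_right omega0_pos (by exact_mod_cast h0)) ih

/-- Monotonicity: if every generator of code (s,c,μ) dominates a generator of (s',c',μ'),
i.e. the upper set of (s,c,μ) is contained in that of (s',c',μ'), then val (s',c',μ') ≤ val (s,c,μ). -/
lemma mono (s c : ℕ) (μ : List ℕ) (s' c' : ℕ) (μ' : List ℕ)
    (hsort' : List.Pairwise (fun a b => b ≤ a) μ')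
    (h : ∀ g ∈ gens s c μ, ∃ g' ∈ gens s' c' μ', g'.1 ≤ g.1 ∧ g'.2 ≤ g.2) :
    val s' c' μ' ≤ val s c μ := by
  -- s' ≤ s
  obtain ⟨y, hy⟩ := gens_fst_s_mem s c μ
  obtain ⟨g1, hg1, hg1le⟩ := h _ hy
  have hs : s' ≤ s := (gens_fst_ge _ _ _ _ hg1).trans hg1le.1
  -- c' ≤ c
  obtain ⟨g2, hg2, hg2le⟩ := h _ (gens_last_mem s c μ)
  have hc : c' ≤ c := (gens_snd_ge _ _ _ _ hg2).trans hg2le.2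
  rw [val_eq, val_eq]
  rcases lt_or_eq_of_le hs with hlt | heq
  · -- s' < s
    have key : omega0 ^ (omega0+1) * s' + (omega0 ^ omega0 * c' + T μ') <
        omega0 ^ (omega0+1) * s := by
      have h2 : omega0 ^ (omega0+1) * s' + (omega0 ^ omega0 * c' + T μ') <
          omega0 ^ (omega0+1) * s' + omega0 ^ (omega0+1) := add_lt_add_right (mid_lt c' μ') _
      have h3 : omega0 ^ (omega0+1) * s' + omega0 ^ (omega0+1)
          = omega0 ^ (omega0+1) * ((s' + 1 : ℕ) : Ordinal) := by
        push_cast; rw [mul_add, mul_one]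
      rw [h3] at h2
      exact h2.trans_le (mul_le_mul_right (by exact_mod_cast hlt) _)
    exact key.le.trans (le_self_add)
  · -- s' = s
    have heq2 : s = s' := heq.symm
    subst heq2
    refine add_le_add_right ?_ _
    rcases lt_or_eq_of_le hc with hlt | heq
    · have h2 : omega0 ^ omega0 * c' + T μ' < omega0 ^ omega0 * c' + omega0 ^ omega0 :=
        add_lt_add_right (T_lt μ') _
      have h3 : omega0 ^ omega0 * c' + omega0 ^ omega0
          = omega0 ^ omega0 * ((c' + 1 : ℕ) : Ordinal) := by
        push_cast; rw [mul_add, mul_one]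
      rw [h3] at h2
      refine le_trans (h2.trans_le (mul_le_mul_right (by exact_mod_cast hlt) _)).le
        (le_self_add)
    · -- c' = c
      have heq2 : c = c' := heq.symm
      subst heq2
      refine add_le_add_right ?_ _
      -- lengths
      have hlen : μ'.length ≤ μ.length := by
        have := gens_snd_le_c s c μ' g2 hg2 hg2le.2
        rw [this] at hg2le
        simpa using hg2le.1
      refine T_le_of_pointwise μ' μ hlen ?_
      intro j h1 h2
      obtain ⟨g', hg', hle'⟩ := h _ (gens_mem_of_lt s c μ j h2)
      rcases gens_mem_char s c μ' g' hg' with hch | ⟨j', hj', hch⟩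
      · rw [hch] at hle'
        simp at hle'
        omega
      · rw [hch] at hle'
        simp only at hle'
        have hj'j : j' ≤ j := by omega
        have hval : μ'.get ⟨j', hj'⟩ ≤ μ.get ⟨j, h2⟩ := by omega
        rcases lt_or_eq_of_le hj'j with hlt2 | rfl
        · have := (List.pairwise_iff_get.1 hsort') ⟨j', hj'⟩ ⟨j, h1⟩ hlt2
          exact this.trans hval
        · exact hval
      
end Stmt17Aux

namespace Stmt17Aux

lemma sumPow_concat (l : List Ordinal) (e : Ordinal) :
    sumPow (l ++ [e]) = sumPow l + omega0 ^ e := by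
  rw [sumPow_append]; simp

lemma mem_expList_cases {s c : ℕ} {ν : List ℕ} {e : Ordinal} (he : e ∈ expList s c ν) :
    e = omega0 + 1 ∨ e = omega0 ∨ ∃ b ∈ ν, e = (b : Ordinal) := by
  rw [expList] at he
  simp only [List.mem_append, List.mem_replicate, List.mem_map] at he
  rcases he with (⟨_, h⟩ | ⟨_, h⟩) | ⟨b, hb, h⟩
  · exact Or.inl h
  · exact Or.inr (Or.inl h)
  · exact Or.inr (Or.inr ⟨b, hb, h.symm⟩)

lemma expList_sorted (s c : ℕ) (ν : List ℕ) (h : List.Pairwise (fun a b => b ≤ a) ν) :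
    List.Pairwise (fun a b : Ordinal => b ≤ a) (expList s c ν) := by
  rw [expList, List.pairwise_append, List.pairwise_append]
  refine ⟨⟨List.pairwise_replicate.2 (Or.inr le_rfl), List.pairwise_replicate.2 (Or.inr le_rfl),
    ?_⟩, ?_, ?_⟩
  · intro a ha b hb
    rw [List.eq_of_mem_replicate ha, List.eq_of_mem_replicate hb]
    exact le_self_add
  · rw [List.pairwise_map]
    exact h.imp (fun hab => by exact_mod_cast hab)
  · intro a ha b hb
    simp only [List.mem_map] at hb
    obtain ⟨n, _, rfl⟩ := hb
    rcases List.mem_append.1 ha with ha | ha <;> rw [List.eq_of_mem_replicate ha]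
    · exact (nat_lt_omega0 n).le.trans (le_self_add)
    · exact (nat_lt_omega0 n).le

lemma headD_concat_le (ν : List ℕ) (e : ℕ) : ν.headD 0 ≤ (ν ++ [e]).headD 0 := by
  cases ν <;> simp

lemma headD_repl_le (ν : List ℕ) (a x : ℕ) (hx : 1 ≤ x) :
    (ν ++ List.replicate x a).headD 0 ≤ (ν ++ [a+1]).headD 0 := by
  cases ν with
  | nil =>
    rcases x with _ | x
    · omega
    · simp [List.replicate_succ]
  | cons b ν => simp

lemma sq_step (x n m : ℕ) (h : n + 1 ≤ (x+1)^2) (h2 : m + 1 ≤ n + x + 1) : m + 1 ≤ (x+2)^2 := by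
  have e1 : (x+1)^2 = x*x + 2*x + 1 := by ring
  have e2 : (x+2)^2 = x*x + 4*x + 4 := by ring
  omega

end Stmt17Aux

namespace Stmt17Aux

lemma lt_add_one' (b : Ordinal) : b < b + 1 := by
  rw [Ordinal.add_one_eq_succ]; exact Order.lt_succ b

lemma opow_omega_add_one_limit : Order.IsSuccLimit (omega0 ^ (omega0 + 1)) :=
  isSuccLimit_opow_left isSuccLimit_omega0 (by
    intro h
    exact absurd (h ▸ lt_of_lt_of_le omega0_pos (le_self_add)) (lt_irrefl 0))

lemma opow_omega_limit : Order.IsSuccLimit (omega0 ^ omega0) :=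
  isSuccLimit_opow_left isSuccLimit_omega0 omega0_ne_zero

lemma opow_nat_succ_limit (a : ℕ) : Order.IsSuccLimit (omega0 ^ ((a : Ordinal) + 1)) := by
  rw [opow_add, opow_one]
  exact isSuccLimit_mul (opow_pos _ omega0_pos) isSuccLimit_omega0

lemma val_nil_zero : val 0 0 [] = 0 := by rw [val_eq]; simp [T]

lemma val_s_succ (s₀ : ℕ) :
    val (s₀+1) 0 [] = sumPow (List.replicate s₀ (omega0+1)) + omega0 ^ (omega0 + 1) := by
  rw [val, expList]
  simp only [List.replicate_succ', List.map_nil, List.append_nil, List.replicate_zero]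
  rw [sumPow_concat]

lemma val_c_succ (s c₀ : ℕ) :
    val s (c₀+1) [] =
      sumPow (List.replicate s (omega0+1) ++ List.replicate c₀ omega0) + omega0 ^ omega0 := by
  rw [val, expList]
  simp only [List.replicate_succ', List.map_nil, List.append_nil]
  rw [← List.append_assoc, sumPow_concat]

lemma val_c_code (s c₀ x : ℕ) :
    val s c₀ [x] =
      sumPow (List.replicate s (omega0+1) ++ List.replicate c₀ omega0)
        + omega0 ^ (x : Ordinal) := by
  rw [val, expList]
  simp only [List.map_cons, List.map_nil]
  rw [sumPow_concat]

lemma val_s_code (s₀ x : ℕ) :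
    val s₀ x [] = sumPow (List.replicate s₀ (omega0+1)) + omega0 ^ omega0 * x := by
  rw [val, expList]
  simp only [List.map_nil, List.append_nil]
  rw [sumPow_append, sumPow_replicate, sumPow_replicate]

lemma val_concat (s c : ℕ) (ν : List ℕ) (a : ℕ) :
    val s c (ν ++ [a]) = val s c ν + omega0 ^ (a : Ordinal) := by
  rw [val, val, expList, expList, List.map_append]
  simp only [List.map_cons, List.map_nil]
  rw [← List.append_assoc, sumPow_concat]

lemma val_repl (s c : ℕ) (ν : List ℕ) (a x : ℕ) :
    val s c (ν ++ List.replicate x a) = val s c ν + omega0 ^ (a : Ordinal) * x := by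
  rw [val, val, expList, expList, List.map_append, List.map_replicate]
  rw [← List.append_assoc, sumPow_append, sumPow_replicate]

end Stmt17Aux

namespace Stmt17Aux

universe v

lemma main (fs : Ordinal.{v} → ℕ → Ordinal.{v})
    (hfs1 : ∀ (l : Ordinal) (x : ℕ), Order.IsSuccLimit l →
      fs (omega0 ^ l) x = omega0 ^ fs l x)
    (hfs2 : ∀ (b : Ordinal) (x : ℕ),
      fs (omega0 ^ (b + 1)) x = omega0 ^ b * (x : Ordinal))
    (hfs3 : ∀ (b l : Ordinal) (x : ℕ), Order.IsSuccLimit l → l < omega0 ^ b + l →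
      fs (omega0 ^ b + l) x = omega0 ^ b + fs l x)
    (H : Ordinal → ℕ → ℕ)
    (hH0 : ∀ x, H 0 x = x)
    (hHs : ∀ (a : Ordinal) (x : ℕ), H (a + 1) x = H a (x + 1))
    (hHl : ∀ (a : Ordinal) (x : ℕ), Order.IsSuccLimit a → H a x = H (fs a x) (x + 1)) :
    ∀ (o : Ordinal) (s c : ℕ) (μ : List ℕ), List.Pairwise (fun a b => b ≤ a) μ → val s c μ = o →
    ∀ x : ℕ, 1 ≤ x → s + c + μ.length + μ.headD 0 + 1 ≤ (x+1)^2 →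
    ∃ cs : List (ℕ × ℕ × List ℕ),
      (H o x - x ≤ cs.length) ∧
      (∀ γ ∈ cs, List.Pairwise (fun a b => b ≤ a) γ.2.2) ∧
      (∀ γ ∈ cs, val γ.1 γ.2.1 γ.2.2 ≤ o) ∧
      List.Pairwise (fun γ δ => val.{v} δ.1 δ.2.1 δ.2.2 < val.{v} γ.1 γ.2.1 γ.2.2) cs ∧
      ∀ i (hi : i < cs.length),
        ∀ g ∈ gens (cs.get ⟨i, hi⟩).1 (cs.get ⟨i, hi⟩).2.1 (cs.get ⟨i, hi⟩).2.2,
          g.1 + g.2 ≤ (x + i + 1)^2 := by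
  intro o
  induction o using Ordinal.induction with
  | h o IH =>
  intro s c μ hsort hval x hx hnorm
  have assemble : ∀ (o' : Ordinal) (s' c' : ℕ) (μ' : List ℕ), o' < o → val s' c' μ' = o' →
      List.Pairwise (fun a b => b ≤ a) μ' →
      s' + c' + μ'.length + μ'.headD 0 + 1 ≤ (x+2)^2 →
      H o x = H o' (x+1) →
      ∃ cs : List (ℕ × ℕ × List ℕ),
        (H o x - x ≤ cs.length) ∧
        (∀ γ ∈ cs, List.Pairwise (fun a b => b ≤ a) γ.2.2) ∧
        (∀ γ ∈ cs, val γ.1 γ.2.1 γ.2.2 ≤ o) ∧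
        List.Pairwise (fun γ δ => val.{v} δ.1 δ.2.1 δ.2.2 < val.{v} γ.1 γ.2.1 γ.2.2) cs ∧
        ∀ i (hi : i < cs.length),
          ∀ g ∈ gens (cs.get ⟨i, hi⟩).1 (cs.get ⟨i, hi⟩).2.1 (cs.get ⟨i, hi⟩).2.2,
            g.1 + g.2 ≤ (x + i + 1)^2 := by
    intro o' s' c' μ' ho' hval' hsort' hnorm' hH
    obtain ⟨cs', h1, h2, h3, h4, h5⟩ :=
      IH o' ho' s' c' μ' hsort' hval' (x+1) (by omega) (by
        have hxx : (x+1)+1 = x+2 := by omega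
        rw [hxx]; exact hnorm')
    refine ⟨(s, c, μ) :: cs', ?_, ?_, ?_, ?_, ?_⟩
    · simp only [List.length_cons]
      rw [hH]
      omega
    · intro γ hγ
      rcases List.mem_cons.1 hγ with rfl | hγ
      · exact hsort
      · exact h2 γ hγ
    · intro γ hγ
      rcases List.mem_cons.1 hγ with rfl | hγ
      · exact le_of_eq hval
      · exact (h3 γ hγ).trans ho'.le
    · rw [List.pairwise_cons]
      refine ⟨?_, h4⟩
      intro δ hδ
      have hh : val δ.1 δ.2.1 δ.2.2 < val s c μ :=
        lt_of_lt_of_le ((h3 δ hδ).trans_lt ho') (le_of_eq hval.symm)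
      exact (by exact hh : _)
    · intro i hi g hg
      rcases i with _ | i
      · have hg2 : g ∈ gens s c μ := by simpa using hg
        have := gens_deg s c μ hsort g hg2
        have hb : x + 0 + 1 = x + 1 := by omega
        rw [hb]
        calc g.1 + g.2 ≤ s + c + μ.length + μ.headD 0 + 1 := this
          _ ≤ (x+1)^2 := hnorm
      · simp only [List.get_cons_succ] at hg
        have := h5 i (by simpa using hi) g hg
        have hb : x + 1 + i + 1 = x + (i+1) + 1 := by omega
        rw [← hb]
        exact this
  rcases List.eq_nil_or_concat μ with rfl | ⟨ν, a, rfl⟩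

  · -- μ = []
    rcases c with _ | c₀
    · rcases s with _ | s₀
      · -- o = 0
        refine ⟨[], ?_, by simp, by simp, by simp, by simp⟩
        rw [← hval, val_nil_zero, hH0]
        omega
      · -- s = s₀+1, limit ω^(ω+1) step
        have hval2 : val (s₀+1) 0 [] =
            sumPow (List.replicate s₀ (omega0+1)) + omega0 ^ (omega0+1) := val_s_succ s₀
        have holim : Order.IsSuccLimit o := by
          rw [← hval, hval2]; exact isSuccLimit_add _ opow_omega_add_one_limit
        have hfso : fs o x = val s₀ x [] := by
          rw [← hval, hval2, fs_sumPow_add fs hfs3 _ _ _ opow_omega_add_one_limit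
            (List.pairwise_replicate.2 (Or.inr le_rfl))
            (fun e he => by
              rw [List.eq_of_mem_replicate he]
              exact (opow_lt_opow_iff_right one_lt_omega0).2 (lt_add_one' _)),
            hfs2, val_s_code]
        have hlt : val s₀ x [] < o := by
          rw [← hval, hval2, val_s_code]
          refine add_lt_add_right ?_ _
          rw [opow_add, opow_one]
          exact (mul_lt_mul_iff_right₀ (opow_pos _ omega0_pos)).2 (nat_lt_omega0 x)
        refine assemble _ s₀ x [] hlt rfl (by simp) ?_ ?_
        · simp only [List.length_nil, List.headD_nil]
          refine sq_step x (s₀+1+0+0+0) _ (by simpa using hnorm) (by omega)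
        · rw [hHl o x holim, hfso]
    · -- c = c₀+1, limit ω^ω step
      have hval2 : val s (c₀+1) [] =
          sumPow (List.replicate s (omega0+1) ++ List.replicate c₀ omega0) + omega0 ^ omega0 :=
        val_c_succ s c₀
      have hsorted : List.Pairwise (fun a b : Ordinal => b ≤ a)
          (List.replicate s (omega0+1) ++ List.replicate c₀ omega0) := by
        rw [List.pairwise_append]
        refine ⟨List.pairwise_replicate.2 (Or.inr le_rfl),
          List.pairwise_replicate.2 (Or.inr le_rfl), ?_⟩
        intro p hp q hq
        rw [List.eq_of_mem_replicate hp, List.eq_of_mem_replicate hq]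
        exact le_self_add
      have holim : Order.IsSuccLimit o := by
        rw [← hval, hval2]; exact isSuccLimit_add _ opow_omega_limit
      have hfsomega : fs omega0 x = (x : Ordinal) := by
        have h1 : omega0 = omega0 ^ ((0:Ordinal)+1) := by rw [zero_add, opow_one]
        rw [h1, hfs2, opow_zero, one_mul]
      have hfso : fs o x = val s c₀ [x] := by
        rw [← hval, hval2, fs_sumPow_add fs hfs3 _ _ _ opow_omega_limit hsorted
          (fun e he => by
            rcases List.mem_append.1 he with h | h <;> rw [List.eq_of_mem_replicate h]
            · exact (opow_lt_opow_iff_right one_lt_omega0).2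
                (lt_of_le_of_lt (le_self_add) (lt_add_one' _))
            · exact (opow_lt_opow_iff_right one_lt_omega0).2 (lt_add_one' _)),
          hfs1 _ _ isSuccLimit_omega0, hfsomega, val_c_code]
      have hlt : val s c₀ [x] < o := by
        rw [← hval, hval2, val_c_code]
        exact add_lt_add_right ((opow_lt_opow_iff_right one_lt_omega0).2 (nat_lt_omega0 x)) _
      refine assemble _ s c₀ [x] hlt rfl (by simp) ?_ ?_
      · simp only [List.length_cons, List.length_nil, List.headD_cons]
        refine sq_step x (s+(c₀+1)+0+0) _ (by simpa using hnorm) (by omega)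
      · rw [hHl o x holim, hfso]
  · -- μ = ν ++ [a]
    rw [List.concat_eq_append] at hsort hval hnorm
    have hsortν : List.Pairwise (fun a b => b ≤ a) ν :=
      hsort.sublist (List.sublist_append_left ν [a])
    have hcross : ∀ b ∈ ν, a ≤ b := by
      intro b hb
      have := (List.pairwise_append.1 hsort).2.2 b hb a (List.mem_singleton_self a)
      exact this
    rcases a with _ | a₀
    · -- successor step
      have hval2 : val s c (ν ++ [0]) = val s c ν + 1 := by
        rw [val_concat]; simp
      have hH : H o x = H (val s c ν) (x+1) := by
        rw [← hval, hval2, hHs]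
      refine assemble _ s c ν (by rw [← hval, hval2]; exact lt_add_one' _) rfl hsortν ?_ hH
      · have hhead := headD_concat_le ν 0
        have hlen : (ν ++ [0]).length = ν.length + 1 := by simp
        refine sq_step x (s+c+(ν ++ [0]).length+((ν ++ [0]).headD 0)) _ hnorm (by omega)
    · -- limit step: last exponent a₀+1
      have hcast : ((a₀+1 : ℕ) : Ordinal) = (a₀ : Ordinal) + 1 := by push_cast; rfl
      have hval2 : val s c (ν ++ [a₀+1]) = val s c ν + omega0 ^ ((a₀ : Ordinal)+1) := by
        rw [val_concat, hcast]
      have holim : Order.IsSuccLimit o := by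
        rw [← hval, hval2]; exact isSuccLimit_add _ (opow_nat_succ_limit a₀)
      have hfso : fs o x = val s c (ν ++ List.replicate x a₀) := by
        rw [← hval, hval2, val]
        rw [fs_sumPow_add fs hfs3 _ _ _ (opow_nat_succ_limit a₀)
          (expList_sorted s c ν hsortν)
          (fun e he => by
            rcases mem_expList_cases he with rfl | rfl | ⟨b, hb, rfl⟩
            · refine (opow_lt_opow_iff_right one_lt_omega0).2 ?_
              have h1 : (a₀ : Ordinal) + 1 ≤ omega0 := by
                rw [Ordinal.add_one_eq_succ]
                exact Order.succ_le_of_lt (nat_lt_omega0 a₀)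
              exact lt_of_le_of_lt h1
                (lt_of_le_of_lt (le_self_add) (lt_add_one' _))
            · refine (opow_lt_opow_iff_right one_lt_omega0).2 ?_
              have h1 : (a₀ : Ordinal) + 1 ≤ omega0 := by
                rw [Ordinal.add_one_eq_succ]
                exact Order.succ_le_of_lt (nat_lt_omega0 a₀)
              exact lt_of_le_of_lt h1 (lt_add_one' _)
            · refine (opow_lt_opow_iff_right one_lt_omega0).2 ?_
              have h1 : (a₀ : Ordinal) + 1 ≤ (b : Ordinal) := by
                rw [← hcast]
                exact_mod_cast hcross b hb
              exact lt_of_le_of_lt h1 (lt_add_one' _)),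
          hfs2]
        rw [val_repl, val]
      have hlt : val s c (ν ++ List.replicate x a₀) < o := by
        rw [← hval, hval2, val_repl]
        refine add_lt_add_right ?_ _
        rw [opow_add, opow_one]
        exact (mul_lt_mul_iff_right₀ (opow_pos _ omega0_pos)).2 (nat_lt_omega0 x)
      have hsort' : List.Pairwise (fun a b => b ≤ a) (ν ++ List.replicate x a₀) := by
        rw [List.pairwise_append]
        exact ⟨hsortν, List.pairwise_replicate.2 (Or.inr le_rfl),
          fun p hp q hq => by
            rw [List.eq_of_mem_replicate hq]
            have := hcross p hp
            omega⟩
      refine assemble _ s c (ν ++ List.replicate x a₀) hlt rfl hsort' ?_ ?_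
      · have hhead := headD_repl_le ν a₀ x hx
        have hlen1 : (ν ++ [a₀+1]).length = ν.length + 1 := by simp
        have hlen2 : (ν ++ List.replicate x a₀).length = ν.length + x := by simp
        refine sq_step x (s+c+(ν ++ [a₀+1]).length+((ν ++ [a₀+1]).headD 0)) _ hnorm (by omega)
      · rw [hHl o x holim, hfso]

end Stmt17Aux

namespace Stmt17Aux

noncomputable def toFS (g : ℕ × ℕ) : Fin 2 →₀ ℕ :=
  Finsupp.single 0 g.1 + Finsupp.single 1 g.2

lemma toFS_apply0 (g : ℕ × ℕ) : toFS g 0 = g.1 := by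
  simp [toFS, Finsupp.single_apply]

lemma toFS_apply1 (g : ℕ × ℕ) : toFS g 1 = g.2 := by
  simp [toFS, Finsupp.single_apply]

lemma toFS_le_iff (g' g : ℕ × ℕ) : toFS g' ≤ toFS g ↔ g'.1 ≤ g.1 ∧ g'.2 ≤ g.2 := by
  rw [Finsupp.le_def, Fin.forall_fin_two, toFS_apply0, toFS_apply0, toFS_apply1, toFS_apply1]

lemma toFS_sum (g : ℕ × ℕ) : (toFS g).sum (fun _ e => e) = g.1 + g.2 := by
  rw [Finsupp.sum_fintype _ _ (fun _ => rfl), Fin.sum_univ_two, toFS_apply0, toFS_apply1]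

end Stmt17Aux


open Stmt17Aux MvPolynomial

/-- For every K there is a sequence (I_i)_{i=1}^L of monomial ideals of F[X,Y] of length
L ≥ H_{ω^{ω+2}}(K) - K, with deg(I_i) ≤ (K+i)² (each I_i is generated by monomials of
total degree ≤ (K+i)²) and such that I_j ⊄ I_i for i < j. -/
theorem stmt17 (F : Type) [Field F]
    (fs : Ordinal → ℕ → Ordinal)
    (hfs1 : ∀ (l : Ordinal) (x : ℕ), Order.IsSuccLimit l →
      fs (Ordinal.omega0 ^ l) x = Ordinal.omega0 ^ fs l x)
    (hfs2 : ∀ (b : Ordinal) (x : ℕ),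
      fs (Ordinal.omega0 ^ (b + 1)) x = Ordinal.omega0 ^ b * (x : Ordinal))
    (hfs3 : ∀ (b l : Ordinal) (x : ℕ), Order.IsSuccLimit l → l < Ordinal.omega0 ^ b + l →
      fs (Ordinal.omega0 ^ b + l) x = Ordinal.omega0 ^ b + fs l x)
    (H : Ordinal → ℕ → ℕ)
    (hH0 : ∀ x, H 0 x = x)
    (hHs : ∀ (a : Ordinal) (x : ℕ), H (a + 1) x = H a (x + 1))
    (hHl : ∀ (a : Ordinal) (x : ℕ), Order.IsSuccLimit a → H a x = H (fs a x) (x + 1))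
    (K : ℕ) :
    ∃ (L : ℕ) (I : Fin L → Ideal (MvPolynomial (Fin 2) F)),
      H (Ordinal.omega0 ^ (Ordinal.omega0 + 2)) K - K ≤ L ∧
      (∀ i : Fin L, ∃ G : Set (Fin 2 →₀ ℕ),
        (∀ g ∈ G, (g : Fin 2 →₀ ℕ).sum (fun _ e => e) ≤ (K + (i : ℕ) + 1) ^ 2) ∧
        I i = Ideal.span ((fun g => MvPolynomial.monomial g (1 : F)) '' G)) ∧
      (∀ i j : Fin L, i < j → ¬ I j ≤ I i) := by
  have hval0 : val K 0 [] = omega0 ^ (omega0 + 1) * K := by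
    rw [val_eq]; simp [T]
  obtain ⟨cs, h1, h2, h3, h4, h5⟩ := main fs hfs1 hfs2 hfs3 H hH0 hHs hHl
    (omega0 ^ (omega0 + 1) * K) K 0 [] (by simp) hval0 (K+1) (by omega)
    (by
      have hsq : (K+1+1)^2 = K*K + 4*K + 4 := by ring
      simp only [List.length_nil, List.headD_nil]
      omega)
  -- the first H-step
  have h22 : (omega0 + 2 : Ordinal) = (omega0 + 1) + 1 := by
    rw [add_assoc]; norm_num
  have hstep : H (omega0 ^ (omega0 + 2)) K = H (omega0 ^ (omega0 + 1) * K) (K+1) := by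
    have hlim : Order.IsSuccLimit (omega0 ^ (omega0 + 2) : Ordinal) := by
      refine isSuccLimit_opow_left isSuccLimit_omega0 ?_
      intro h
      have : (0:Ordinal) < omega0 + 2 := lt_of_lt_of_le omega0_pos (le_self_add)
      rw [h] at this
      exact absurd this (lt_irrefl 0)
    rw [hHl _ _ hlim, h22, hfs2]
  -- the ideals
  refine ⟨cs.length + 1, ?_⟩
  set code : ℕ → ℕ × ℕ × List ℕ := fun j => cs.getD j (0, 0, []) with hcode
  set Gs : Fin (cs.length + 1) → Set (Fin 2 →₀ ℕ) := fun i =>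
    if i.1 = 0 then ∅ else toFS '' {g | g ∈ gens (code (i.1 - 1)).1 (code (i.1 - 1)).2.1
      (code (i.1 - 1)).2.2} with hGs
  refine ⟨fun i => Ideal.span ((fun g => MvPolynomial.monomial g (1 : F)) '' Gs i), ?_, ?_, ?_⟩
  · rw [hstep]
    omega
  · intro i
    refine ⟨Gs i, ?_, rfl⟩
    intro g hg
    simp only [hGs] at hg
    rcases Nat.eq_zero_or_pos i.1 with h0 | hpos
    · simp [h0] at hg
    · rw [if_neg (by omega)] at hg
      obtain ⟨p, hp, rfl⟩ := hg
      have hj : i.1 - 1 < cs.length := by omega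
      have hcd : code (i.1 - 1) = cs.get ⟨i.1 - 1, hj⟩ := List.getD_eq_get _ _ ⟨i.1 - 1, hj⟩
      rw [toFS_sum]
      have := h5 (i.1 - 1) hj p (by rw [← hcd]; exact hp)
      have harith : K + 1 + (i.1 - 1) + 1 = K + i.1 + 1 := by omega
      rw [harith] at this
      exact this
  · intro i j hij hle
    have hj1 : 1 ≤ j.1 := by
      have := hij
      rw [Fin.lt_def] at this
      omega
    -- a monomial generator of I j
    have hjlt : j.1 - 1 < cs.length := by omega
    set γ := code (j.1 - 1) with hγ
    have hcdj : γ = cs.get ⟨j.1 - 1, hjlt⟩ := List.getD_eq_get _ _ ⟨j.1 - 1, hjlt⟩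
    -- I j is the span over gens γ
    have hmem : ∀ g ∈ gens γ.1 γ.2.1 γ.2.2,
        MvPolynomial.monomial (toFS g) (1 : F) ∈
          Ideal.span ((fun g => MvPolynomial.monomial g (1 : F)) '' Gs j) := by
      intro g hg
      refine Ideal.subset_span ⟨toFS g, ?_, rfl⟩
      simp only [hGs]
      rw [if_neg (by omega)]
      exact ⟨g, hg, rfl⟩
    rcases Nat.eq_zero_or_pos i.1 with h0 | hpos
    · -- I i = ⊥
      have hbot : Ideal.span ((fun g => MvPolynomial.monomial g (1 : F)) '' Gs i) = ⊥ := by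
        simp only [hGs]
        simp [h0]
      have hg := hmem _ (gens_last_mem γ.1 γ.2.1 γ.2.2)
      have hmemb : MvPolynomial.monomial (toFS (γ.1 + γ.2.2.length, γ.2.1)) (1:F) ∈
          (⊥ : Ideal (MvPolynomial (Fin 2) F)) := by
        rw [← hbot]
        exact hle hg
      rw [Ideal.mem_bot] at hmemb
      exact absurd hmemb (by simp)
    · -- both nonzero: use monotonicity and the strict descent
      have hilt : i.1 - 1 < cs.length := by omega
      set δ := code (i.1 - 1) with hδ
      have hcdi : δ = cs.get ⟨i.1 - 1, hilt⟩ := List.getD_eq_get _ _ ⟨i.1 - 1, hilt⟩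
      have hkey : ∀ g ∈ gens γ.1 γ.2.1 γ.2.2, ∃ g' ∈ gens δ.1 δ.2.1 δ.2.2,
          g'.1 ≤ g.1 ∧ g'.2 ≤ g.2 := by
        intro g hg
        have h1m := hle (hmem g hg)
        rw [MvPolynomial.mem_ideal_span_monomial_image] at h1m
        have hsup : toFS g ∈ (MvPolynomial.monomial (toFS g) (1 : F)).support := by
          simp [MvPolynomial.support_monomial]
        obtain ⟨si, hsi, hsile⟩ := h1m _ hsup
        simp only [hGs] at hsi
        rw [if_neg (by omega)] at hsi
        obtain ⟨g', hg', rfl⟩ := hsi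
        exact ⟨g', hg', (toFS_le_iff g' g).1 hsile⟩
      have hmono : val δ.1 δ.2.1 δ.2.2 ≤ val γ.1 γ.2.1 γ.2.2 :=
        mono γ.1 γ.2.1 γ.2.2 δ.1 δ.2.1 δ.2.2
          (by rw [hcdi]; exact h2 _ (cs.get_mem _)) hkey
      have hpair := (List.pairwise_iff_get.1 h4) ⟨i.1 - 1, hilt⟩ ⟨j.1 - 1, hjlt⟩
        (by
          rw [Fin.lt_def] at hij ⊢
          simp only
          omega)
      rw [← hcdi, ← hcdj] at hpair
      exact absurd hmono (not_le_of_gt hpair)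
end
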